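/- arXiv:1605.08665 — 10 statements merged into one kernel-verified Lean document; each statement's English description precedes it below -/
import Mathlib

section
/- For a fixed complex m×n matrix A, the function p ↦ ‖A‖_p (the spectral p-norm) is Lipschitz continuous on [1, ∞): for p > q ≥ 1, 0 ≤ ‖A‖_p − ‖A‖_q ≤ (p − q)·|A|₁·(mn)·log(mn), where |A|₁ is the sum of absolute values of entries of A. -/
/-!
Rescaling `x` and `y` to the unit `p`-sphere gives `|yᵀ A x| ≤ ‖x‖_p ‖y‖_p ‖A‖_p`.
Since the unit `q`-sphere lies inside the unit `p`-ball for `q ≤ p`, the norm is monotone in `p`;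
conversely the power mean inequality `‖x‖_q ≤ n ^ (1/q - 1/p) ‖x‖_p` gives
`‖A‖_p ≤ (mn) ^ (1/q - 1/p) ‖A‖_q`. Hence `‖A‖_p - ‖A‖_q ≤ ((mn) ^ s - 1) |A|₁` with
`s = 1/q - 1/p ≤ p - q`, and the mean value theorem for `x ↦ (mn) ^ x` bounds `(mn) ^ s - 1` by
`s · mn · log (mn)`.
-/

/-- The spectral p-norm of a complex m×n matrix. -/
noncomputable def specNorm (m n : ℕ) (p : ℝ) (A : Matrix (Fin m) (Fin n) ℂ) : ℝ :=
  sSup {t : ℝ | ∃ (x : Fin n → ℂ) (y : Fin m → ℂ),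
    (∑ j, ‖x j‖ ^ p) = 1 ∧ (∑ i, ‖y i‖ ^ p) = 1 ∧
    t = ‖∑ i, ∑ j, A i j * x j * y i‖}

open Finset Real

section PowerSums

variable {ι E : Type*} [Fintype ι] [NormedAddCommGroup E]

theorem norm_le_one_of_sum_rpow_norm_eq_one {p : ℝ} (hp : 0 < p) {x : ι → E}
    (hx : ∑ j, ‖x j‖ ^ p = 1) (j : ι) : ‖x j‖ ≤ 1 := by
  have hj : ‖x j‖ ^ p ≤ 1 :=
    hx ▸ single_le_sum (fun k _ => rpow_nonneg (norm_nonneg (x k)) p) (mem_univ j)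
  by_contra! h
  exact (one_lt_rpow h hp).not_ge hj

theorem sum_rpow_norm_le_one_of_le {p q : ℝ} (hq : 0 < q) (hqp : q ≤ p) {x : ι → E}
    (hx : ∑ j, ‖x j‖ ^ q = 1) : ∑ j, ‖x j‖ ^ p ≤ 1 :=
  hx ▸ sum_le_sum fun j _ => rpow_le_rpow_of_exponent_ge' (norm_nonneg _)
    (norm_le_one_of_sum_rpow_norm_eq_one hq hx j) hq.le hqp

theorem sum_rpow_norm_pos {x : ι → E} (hx : x ≠ 0) (p : ℝ) : 0 < ∑ j, ‖x j‖ ^ p := by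
  obtain ⟨j, hj⟩ := Function.ne_iff.1 hx
  exact sum_pos' (fun k _ => rpow_nonneg (norm_nonneg (x k)) p)
    ⟨j, mem_univ j, rpow_pos_of_pos (norm_pos_iff.2 hj) p⟩

theorem sum_rpow_norm_smul_inv_eq_one [NormedSpace ℝ E] {p : ℝ} (hp : p ≠ 0) {x : ι → E}
    (hx : x ≠ 0) :
    ∑ j, ‖((∑ k, ‖x k‖ ^ p) ^ p⁻¹)⁻¹ • x j‖ ^ p = 1 := by
  have hs := sum_rpow_norm_pos hx p
  have hc : 0 ≤ ((∑ k, ‖x k‖ ^ p) ^ p⁻¹)⁻¹ := by positivity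
  simp_rw [norm_smul, norm_of_nonneg hc, mul_rpow hc (norm_nonneg _), ← mul_sum,
    inv_rpow (rpow_nonneg hs.le _), rpow_inv_rpow hs.le hp, inv_mul_cancel₀ hs.ne']

theorem sum_rpow_norm_rpow_inv_le {p q : ℝ} (hq : 0 < q) (hqp : q ≤ p) (x : ι → E) :
    (∑ j, ‖x j‖ ^ q) ^ q⁻¹ ≤
      (Fintype.card ι : ℝ) ^ (q⁻¹ - p⁻¹) * (∑ j, ‖x j‖ ^ p) ^ p⁻¹ := by
  have hp : 0 < p := hq.trans_le hqp
  have hmean := rpow_sum_le_const_mul_sum_rpow_of_nonneg (s := univ)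
    (f := fun j => ‖x j‖ ^ q) ((one_le_div hq).2 hqp) fun j _ => rpow_nonneg (norm_nonneg _) q
  simp_rw [← rpow_mul (norm_nonneg _), mul_div_cancel₀ p hq.ne', card_univ] at hmean
  have := rpow_le_rpow (by positivity) hmean (inv_nonneg.2 hp.le)
  have hexp₁ : p / q * p⁻¹ = q⁻¹ := by field_simp
  have hexp₂ : (p / q - 1) * p⁻¹ = q⁻¹ - p⁻¹ := by field_simp
  rwa [← rpow_mul (by positivity), mul_rpow (by positivity) (by positivity),
    ← rpow_mul (by positivity), hexp₁, hexp₂] at this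

end PowerSums

section Bilinear

variable {ι κ : Type*} [Fintype ι] [Fintype κ] (A : Matrix ι κ ℂ)

theorem norm_sum_mul_le_sum_norm {x : κ → ℂ} {y : ι → ℂ} (hx : ∀ j, ‖x j‖ ≤ 1)
    (hy : ∀ i, ‖y i‖ ≤ 1) : ‖∑ i, ∑ j, A i j * x j * y i‖ ≤ ∑ i, ∑ j, ‖A i j‖ := by
  refine (norm_sum_le _ _).trans <| sum_le_sum fun i _ => (norm_sum_le _ _).trans <|
    sum_le_sum fun j _ => ?_
  rw [norm_mul, norm_mul]
  calc ‖A i j‖ * ‖x j‖ * ‖y i‖ ≤ ‖A i j‖ * 1 * 1 := by gcongr <;> simp [hx, hy]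
    _ = ‖A i j‖ := by ring

theorem sum_mul_smul_smul (c d : ℝ) (x : κ → ℂ) (y : ι → ℂ) :
    ∑ i, ∑ j, A i j * (c • x j) * (d • y i) = (c * d) • ∑ i, ∑ j, A i j * x j * y i := by
  simp_rw [smul_sum, mul_smul_comm, smul_mul_assoc, smul_smul, mul_comm d c]

end Bilinear

section SpecNorm

variable {m n : ℕ} (A : Matrix (Fin m) (Fin n) ℂ)

theorem specNorm_nonneg (p : ℝ) : 0 ≤ specNorm m n p A :=
  Real.sSup_nonneg <| by rintro _ ⟨x, y, -, -, rfl⟩; exact norm_nonneg _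

theorem specNorm_le {p a : ℝ}
    (h : ∀ (x : Fin n → ℂ) (y : Fin m → ℂ), ∑ j, ‖x j‖ ^ p = 1 → ∑ i, ‖y i‖ ^ p = 1 →
      ‖∑ i, ∑ j, A i j * x j * y i‖ ≤ a)
    (ha : 0 ≤ a) : specNorm m n p A ≤ a :=
  Real.sSup_le (by rintro _ ⟨x, y, hx, hy, rfl⟩; exact h x y hx hy) ha

theorem specNorm_le_sum_norm {p : ℝ} (hp : 0 < p) : specNorm m n p A ≤ ∑ i, ∑ j, ‖A i j‖ :=
  specNorm_le A (fun _ _ hx hy => norm_sum_mul_le_sum_norm A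
    (norm_le_one_of_sum_rpow_norm_eq_one hp hx) (norm_le_one_of_sum_rpow_norm_eq_one hp hy))
    (by positivity)

theorem le_specNorm {p : ℝ} (hp : 0 < p) {x : Fin n → ℂ} {y : Fin m → ℂ}
    (hx : ∑ j, ‖x j‖ ^ p = 1) (hy : ∑ i, ‖y i‖ ^ p = 1) :
    ‖∑ i, ∑ j, A i j * x j * y i‖ ≤ specNorm m n p A := by
  refine le_csSup ⟨∑ i, ∑ j, ‖A i j‖, ?_⟩ ⟨x, y, hx, hy, rfl⟩
  rintro _ ⟨x, y, hx, hy, rfl⟩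
  exact norm_sum_mul_le_sum_norm A (norm_le_one_of_sum_rpow_norm_eq_one hp hx)
    (norm_le_one_of_sum_rpow_norm_eq_one hp hy)

theorem norm_sum_mul_le_mul_specNorm {p : ℝ} (hp : 0 < p) (x : Fin n → ℂ) (y : Fin m → ℂ) :
    ‖∑ i, ∑ j, A i j * x j * y i‖ ≤
      (∑ j, ‖x j‖ ^ p) ^ p⁻¹ * (∑ i, ‖y i‖ ^ p) ^ p⁻¹ * specNorm m n p A := by
  have hrhs : 0 ≤ (∑ j, ‖x j‖ ^ p) ^ p⁻¹ * (∑ i, ‖y i‖ ^ p) ^ p⁻¹ * specNorm m n p A :=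
    mul_nonneg (by positivity) (specNorm_nonneg A p)
  rcases eq_or_ne x 0 with rfl | hx
  · simpa using hrhs
  rcases eq_or_ne y 0 with rfl | hy
  · simpa using hrhs
  set a := (∑ j, ‖x j‖ ^ p) ^ p⁻¹
  set b := (∑ i, ‖y i‖ ^ p) ^ p⁻¹
  have ha : 0 < a := rpow_pos_of_pos (sum_rpow_norm_pos hx p) _
  have hb : 0 < b := rpow_pos_of_pos (sum_rpow_norm_pos hy p) _
  have key := le_specNorm A hp (sum_rpow_norm_smul_inv_eq_one hp.ne' hx)
    (sum_rpow_norm_smul_inv_eq_one hp.ne' hy)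
  rw [sum_mul_smul_smul, norm_smul, norm_of_nonneg (by positivity)] at key
  calc ‖∑ i, ∑ j, A i j * x j * y i‖
      = a * b * (a⁻¹ * b⁻¹ * ‖∑ i, ∑ j, A i j * x j * y i‖) := by field_simp
    _ ≤ a * b * specNorm m n p A := by gcongr

theorem specNorm_mono {p q : ℝ} (hq : 0 < q) (hqp : q ≤ p) :
    specNorm m n q A ≤ specNorm m n p A := by
  have hp : 0 < p := hq.trans_le hqp
  refine specNorm_le A (fun x y hx hy => ?_) (specNorm_nonneg A p)
  have hx' := rpow_le_one (by positivity) (sum_rpow_norm_le_one_of_le hq hqp hx)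
    (inv_nonneg.2 hp.le)
  have hy' := rpow_le_one (by positivity) (sum_rpow_norm_le_one_of_le hq hqp hy)
    (inv_nonneg.2 hp.le)
  calc ‖∑ i, ∑ j, A i j * x j * y i‖
      ≤ (∑ j, ‖x j‖ ^ p) ^ p⁻¹ * (∑ i, ‖y i‖ ^ p) ^ p⁻¹ * specNorm m n p A :=
        norm_sum_mul_le_mul_specNorm A hp x y
    _ ≤ 1 * 1 * specNorm m n p A := by gcongr; exact specNorm_nonneg A p
    _ = specNorm m n p A := by ring

theorem specNorm_le_rpow_mul_specNorm {p q : ℝ} (hq : 0 < q) (hqp : q ≤ p) :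
    specNorm m n p A ≤ ((m * n : ℕ) : ℝ) ^ (q⁻¹ - p⁻¹) * specNorm m n q A := by
  refine specNorm_le A (fun x y hx hy => ?_) (mul_nonneg (by positivity) (specNorm_nonneg A q))
  have hx' := sum_rpow_norm_rpow_inv_le hq hqp x
  have hy' := sum_rpow_norm_rpow_inv_le hq hqp y
  rw [hx, one_rpow, mul_one, Fintype.card_fin] at hx'
  rw [hy, one_rpow, mul_one, Fintype.card_fin] at hy'
  calc ‖∑ i, ∑ j, A i j * x j * y i‖
      ≤ (∑ j, ‖x j‖ ^ q) ^ q⁻¹ * (∑ i, ‖y i‖ ^ q) ^ q⁻¹ * specNorm m n q A :=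
        norm_sum_mul_le_mul_specNorm A hq x y
    _ ≤ (n : ℝ) ^ (q⁻¹ - p⁻¹) * (m : ℝ) ^ (q⁻¹ - p⁻¹) * specNorm m n q A := by
        gcongr; exact specNorm_nonneg A q
    _ = ((m * n : ℕ) : ℝ) ^ (q⁻¹ - p⁻¹) * specNorm m n q A := by
        rw [Nat.cast_mul, mul_rpow (by positivity) (by positivity), mul_comm ((n : ℝ) ^ _)]

end SpecNorm

theorem inv_sub_inv_le_sub {p q : ℝ} (hq : 1 ≤ q) (hqp : q ≤ p) : q⁻¹ - p⁻¹ ≤ p - q := by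
  have hq₀ : 0 < q := one_pos.trans_le hq
  rw [inv_sub_inv hq₀.ne' (hq₀.trans_le hqp).ne']
  exact div_le_self (by linarith) (by nlinarith)

/-- The mean value bound for `x ↦ N ^ x` on `[0, s]`, in the form `eᵘ - 1 ≤ u eᵘ`. -/
theorem rpow_sub_one_le_mul_mul_log {N s : ℝ} (hN : 1 ≤ N) (hs₀ : 0 ≤ s) (hs₁ : s ≤ 1) :
    N ^ s - 1 ≤ s * N * log N := by
  have hlog : 0 ≤ log N := log_nonneg hN
  have hmvt : N ^ s - 1 ≤ s * log N * N ^ s := by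
    rw [rpow_def_of_pos (one_pos.trans_le hN)]
    have h := mul_le_mul_of_nonneg_right (add_one_le_exp (-(log N * s)))
      (exp_pos (log N * s)).le
    rw [← exp_add, neg_add_cancel, exp_zero] at h
    linarith
  calc N ^ s - 1 ≤ s * log N * N ^ s := hmvt
    _ ≤ s * log N * N := by
        gcongr
        exact (rpow_le_rpow_of_exponent_le hN hs₁).trans_eq (rpow_one N)
    _ = s * N * log N := by ring

/-- Lipschitz continuity of p ↦ ‖A‖_p. -/
theorem stmt_4 (m n : ℕ) (A : Matrix (Fin m) (Fin n) ℂ) (p q : ℝ)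
    (hq : 1 ≤ q) (hpq : q < p) :
    0 ≤ specNorm m n p A - specNorm m n q A ∧
    specNorm m n p A - specNorm m n q A ≤
      (p - q) * (∑ i, ∑ j, ‖A i j‖) * ((m * n : ℕ) : ℝ) * Real.log ((m * n : ℕ) : ℝ) := by
  have hq₀ : 0 < q := one_pos.trans_le hq
  set N : ℝ := ((m * n : ℕ) : ℝ)
  set s := q⁻¹ - p⁻¹
  have hs₀ : 0 < s := sub_pos.2 (inv_strictAnti₀ hq₀ hpq)
  have hs₁ : s ≤ 1 := by linarith [inv_le_one_of_one_le₀ hq, inv_pos.2 (hq₀.trans hpq)]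
  refine ⟨sub_nonneg.2 (specNorm_mono A hq₀ hpq.le), ?_⟩
  have hdiff : specNorm m n p A - specNorm m n q A ≤ (N ^ s - 1) * specNorm m n q A := by
    linarith [specNorm_le_rpow_mul_specNorm A hq₀ hpq.le]
  rcases Nat.eq_zero_or_pos (m * n) with hN | hN
  · simp only [N, hN, Nat.cast_zero, zero_rpow hs₀.ne', log_zero, mul_zero] at hdiff ⊢
    linarith [specNorm_nonneg A q]
  have hN₁ : 1 ≤ N := Nat.one_le_cast.2 hN
  have hlog : 0 ≤ log N := log_nonneg hN₁
  calc specNorm m n p A - specNorm m n q A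
      ≤ (N ^ s - 1) * ∑ i, ∑ j, ‖A i j‖ := hdiff.trans <| by
        gcongr
        · exact sub_nonneg.2 (one_le_rpow hN₁ hs₀.le)
        · exact specNorm_le_sum_norm A hq₀
    _ ≤ (s * N * log N) * ∑ i, ∑ j, ‖A i j‖ := by
        gcongr; exact rpow_sub_one_le_mul_mul_log hN₁ hs₀.le hs₁
    _ ≤ ((p - q) * N * log N) * ∑ i, ∑ j, ‖A i j‖ := by
        gcongr; exact inv_sub_inv_le_sub hq hpq.le
    _ = (p - q) * (∑ i, ∑ j, ‖A i j‖) * N * log N := by ring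
end

section
/- If A is a nonnegative m×n real matrix, then the spectral p-norm ‖A‖_p tends to the sum of all entries of A as p → ∞. -/
/-!
For `p > 0`, a vector with `∑ |x j| ^ p = 1` has all coordinates in `[-1, 1]`, so for a
nonnegative matrix every value of the bilinear form is at most `∑ a_ij`. Conversely the
constant unit vectors `x j = n ^ (-1/p)`, `y i = m ^ (-1/p)` give the value
`(∑ a_ij) (n ^ (-1/p) m ^ (-1/p))`, which tends to `∑ a_ij` as `p → ∞`.
-/

/-- The spectral p-norm of a real m×n matrix. -/
noncomputable def specNormR (m n : ℕ) (p : ℝ) (A : Matrix (Fin m) (Fin n) ℝ) : ℝ :=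
  sSup {t : ℝ | ∃ (x : Fin n → ℝ) (y : Fin m → ℝ),
    (∑ j, |x j| ^ p) = 1 ∧ (∑ i, |y i| ^ p) = 1 ∧
    t = ∑ i, ∑ j, A i j * x j * y i}

open Filter Topology

lemma abs_le_one_of_sum_abs_rpow_eq_one {ι : Type*} [Fintype ι] {p : ℝ} (hp : 0 < p)
    {x : ι → ℝ} (hx : ∑ j, |x j| ^ p = 1) (j : ι) : |x j| ≤ 1 := by
  by_contra! h
  have hsingle : |x j| ^ p ≤ ∑ k, |x k| ^ p :=
    Finset.single_le_sum (f := fun k => |x k| ^ p) (fun _ _ => by positivity) (Finset.mem_univ j)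
  linarith [Real.one_lt_rpow h hp]

lemma bilinear_le_sum_of_sum_abs_rpow_eq_one {ι κ : Type*} [Fintype ι] [Fintype κ]
    {A : Matrix ι κ ℝ} (hA : ∀ i j, 0 ≤ A i j) {p : ℝ} (hp : 0 < p) {x : κ → ℝ} {y : ι → ℝ}
    (hx : ∑ j, |x j| ^ p = 1) (hy : ∑ i, |y i| ^ p = 1) :
    ∑ i, ∑ j, A i j * x j * y i ≤ ∑ i, ∑ j, A i j := by
  gcongr with i _ j _
  calc A i j * x j * y i ≤ |A i j * x j * y i| := le_abs_self _
    _ = A i j * |x j| * |y i| := by rw [abs_mul, abs_mul, abs_of_nonneg (hA i j)]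
    _ ≤ A i j * 1 * 1 :=
      mul_le_mul (mul_le_mul_of_nonneg_left (abs_le_one_of_sum_abs_rpow_eq_one hp hx j) (hA i j))
        (abs_le_one_of_sum_abs_rpow_eq_one hp hy i) (abs_nonneg _) (by simpa using hA i j)
    _ = A i j := by ring

lemma sum_abs_natCast_rpow_neg_inv {n : ℕ} (hn : n ≠ 0) {p : ℝ} (hp : p ≠ 0) :
    ∑ _j : Fin n, |(n : ℝ) ^ (-p⁻¹)| ^ p = 1 := by
  have hn' : (0 : ℝ) < n := by positivity
  rw [abs_of_nonneg (by positivity), ← Real.rpow_mul hn'.le, neg_mul, inv_mul_cancel₀ hp,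
    Real.rpow_neg_one, Finset.sum_const, Finset.card_univ, Fintype.card_fin, nsmul_eq_mul,
    mul_inv_cancel₀ hn'.ne']

lemma tendsto_natCast_rpow_neg_inv_atTop {n : ℕ} (hn : n ≠ 0) :
    Tendsto (fun p : ℝ => (n : ℝ) ^ (-p⁻¹)) atTop (𝓝 1) := by
  have hexp : Tendsto (fun p : ℝ => -p⁻¹) atTop (𝓝 0) := by
    simpa using (tendsto_inv_atTop_zero (𝕜 := ℝ)).neg
  simpa [Function.comp_def] using
    (Real.continuousAt_const_rpow (b := 0) (by positivity)).tendsto.comp hexp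

section specNormR

variable {m n : ℕ} {A : Matrix (Fin m) (Fin n) ℝ} {p : ℝ}

lemma specNormR_le_sum (hA : ∀ i j, 0 ≤ A i j) (hp : 0 < p) :
    specNormR m n p A ≤ ∑ i, ∑ j, A i j := by
  refine Real.sSup_le ?_ (Finset.sum_nonneg fun i _ => Finset.sum_nonneg fun j _ => hA i j)
  rintro t ⟨x, y, hx, hy, rfl⟩
  exact bilinear_le_sum_of_sum_abs_rpow_eq_one hA hp hx hy

lemma sum_mul_le_specNormR (hA : ∀ i j, 0 ≤ A i j) (hp : 0 < p) (hm : m ≠ 0) (hn : n ≠ 0) :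
    (∑ i, ∑ j, A i j) * ((n : ℝ) ^ (-p⁻¹) * (m : ℝ) ^ (-p⁻¹)) ≤ specNormR m n p A := by
  refine le_csSup ⟨∑ i, ∑ j, A i j, ?_⟩ ⟨fun _ => (n : ℝ) ^ (-p⁻¹), fun _ => (m : ℝ) ^ (-p⁻¹),
    sum_abs_natCast_rpow_neg_inv hn hp.ne', sum_abs_natCast_rpow_neg_inv hm hp.ne', ?_⟩
  · rintro t ⟨x, y, hx, hy, rfl⟩
    exact bilinear_le_sum_of_sum_abs_rpow_eq_one hA hp hx hy
  · simp only [Finset.sum_mul]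
    exact Finset.sum_congr rfl fun i _ => Finset.sum_congr rfl fun j _ => by ring

lemma specNormR_eq_zero_of_eq_zero (h : m = 0 ∨ n = 0) : specNormR m n p A = 0 := by
  rw [specNormR, ← Real.sSup_empty]
  congr
  refine Set.eq_empty_of_forall_notMem ?_
  rintro t ⟨x, y, hx, hy, -⟩
  rcases h with rfl | rfl <;> simp_all

end specNormR

/-- For nonnegative A, ‖A‖_p → ∑_{i,j} a_{ij} as p → ∞. -/
theorem stmt_5 (m n : ℕ) (A : Matrix (Fin m) (Fin n) ℝ)
    (hA : ∀ i j, 0 ≤ A i j) :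
    Filter.Tendsto (fun p : ℝ => specNormR m n p A) Filter.atTop
      (nhds (∑ i, ∑ j, A i j)) := by
  by_cases h : m = 0 ∨ n = 0
  · have hS : ∑ i, ∑ j, A i j = 0 := by rcases h with rfl | rfl <;> simp
    simpa only [specNormR_eq_zero_of_eq_zero h, hS] using tendsto_const_nhds
  obtain ⟨hm, hn⟩ := not_or.mp h
  have hlower : Tendsto (fun p : ℝ => (∑ i, ∑ j, A i j) * ((n : ℝ) ^ (-p⁻¹) * (m : ℝ) ^ (-p⁻¹)))
      atTop (𝓝 (∑ i, ∑ j, A i j)) := by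
    simpa using tendsto_const_nhds.mul
      ((tendsto_natCast_rpow_neg_inv_atTop hn).mul (tendsto_natCast_rpow_neg_inv_atTop hm))
  refine tendsto_of_tendsto_of_tendsto_of_le_of_le' hlower tendsto_const_nhds ?_ ?_
  · filter_upwards [eventually_gt_atTop 0] with p hp using sum_mul_le_specNormR hA hp hm hn
  · filter_upwards [eventually_gt_atTop 0] with p hp using specNormR_le_sum hA hp
end

section
/- For a real m×n matrix A, ‖A‖₂² ≤ max over pairs (i,j) with a_{ij} ≠ 0 of r_i·c_j, where r_i = ∑_k |a_{ik}| is the i-th absolute row sum and c_j = ∑_k |a_{kj}| is the j-th absolute column sum, and ‖A‖₂ is the spectral (operator) 2-norm. -/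
lemma amgm_aux (x y r c M : ℝ) (hr : 0 < r) (hc : 0 < c) (hM : r * c ≤ M) :
    |x| * |y| ≤ (Real.sqrt M / 2) * (x ^ 2 / c + y ^ 2 / r) := by
  set s := Real.sqrt (r * c) with hs
  have hs0 : 0 ≤ s := Real.sqrt_nonneg _
  have hs2 : s ^ 2 = r * c := Real.sq_sqrt (by positivity)
  have hu2 : (Real.sqrt (s / c)) ^ 2 = s / c := Real.sq_sqrt (by positivity)
  have hv2 : (Real.sqrt (s / r)) ^ 2 = s / r := Real.sq_sqrt (by positivity)
  have huv : Real.sqrt (s / c) * Real.sqrt (s / r) = 1 := by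
    rw [← Real.sqrt_mul (by positivity)]
    have : s / c * (s / r) = 1 := by
      field_simp
      nlinarith [hs2]
    rw [this, Real.sqrt_one]
  have key : 2 * (|x| * |y|) ≤ s / c * x ^ 2 + s / r * y ^ 2 := by
    have h1 : 0 ≤ (Real.sqrt (s / c) * |x| - Real.sqrt (s / r) * |y|) ^ 2 := sq_nonneg _
    have h2 : (Real.sqrt (s / c) * |x| - Real.sqrt (s / r) * |y|) ^ 2 =
        (Real.sqrt (s / c)) ^ 2 * |x| ^ 2 -
        2 * (Real.sqrt (s / c) * Real.sqrt (s / r)) * (|x| * |y|) +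
        (Real.sqrt (s / r)) ^ 2 * |y| ^ 2 := by ring
    rw [hu2, hv2, huv, sq_abs, sq_abs] at h2
    rw [h2] at h1
    linarith
  have hsM : s ≤ Real.sqrt M := Real.sqrt_le_sqrt hM
  have hpos : 0 ≤ x ^ 2 / c + y ^ 2 / r := by positivity
  calc |x| * |y| ≤ (s / 2) * (x ^ 2 / c + y ^ 2 / r) := by
        have : s / c * x ^ 2 + s / r * y ^ 2 = s * (x ^ 2 / c + y ^ 2 / r) := by ring
        nlinarith [key]
    _ ≤ (Real.sqrt M / 2) * (x ^ 2 / c + y ^ 2 / r) := by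
        apply mul_le_mul_of_nonneg_right _ hpos
        linarith

/-- Kolotilina's bound: ‖A‖₂² ≤ max_{a_{ij} ≠ 0} r_i c_j. -/
theorem stmt_6 (m n : ℕ) (A : Matrix (Fin m) (Fin n) ℝ) :
    (sSup {t : ℝ | ∃ (x : Fin n → ℝ) (y : Fin m → ℝ),
        (∑ j, x j ^ 2) = 1 ∧ (∑ i, y i ^ 2) = 1 ∧
        t = |∑ i, ∑ j, A i j * x j * y i|}) ^ 2 ≤
    sSup {t : ℝ | ∃ i j, A i j ≠ 0 ∧
        t = (∑ k, |A i k|) * (∑ k, |A k j|)} := by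
  set T : Set ℝ := {t : ℝ | ∃ i j, A i j ≠ 0 ∧
      t = (∑ k, |A i k|) * (∑ k, |A k j|)} with hT
  set M := sSup T with hMdef
  have hTfin : T.Finite := by
    apply Set.Finite.subset (Set.finite_range
      (fun p : Fin m × Fin n => (∑ k, |A p.1 k|) * (∑ k, |A k p.2|)))
    rintro t ⟨i, j, _, rfl⟩
    exact ⟨(i, j), rfl⟩
  have hTbdd : BddAbove T := hTfin.bddAbove
  have hM0 : 0 ≤ M := Real.sSup_nonneg (by
    rintro t ⟨i, j, _, rfl⟩
    positivity)
  set r : Fin m → ℝ := fun i => ∑ k, |A i k| with hrdef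
  set c : Fin n → ℝ := fun j => ∑ k, |A k j| with hcdef
  have main : ∀ x : Fin n → ℝ, ∀ y : Fin m → ℝ,
      (∑ j, x j ^ 2) = 1 → (∑ i, y i ^ 2) = 1 →
      |∑ i, ∑ j, A i j * x j * y i| ≤ Real.sqrt M := by
    intro x y hx hy
    have term_bd : ∀ i j, |A i j * x j * y i| ≤
        (Real.sqrt M / 2) * (|A i j| * x j ^ 2 / c j + |A i j| * y i ^ 2 / r i) := by
      intro i j
      by_cases hA : A i j = 0
      · simp [hA]
      · have hri : 0 < r i := by
          apply lt_of_lt_of_le (abs_pos.mpr hA)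
          exact Finset.single_le_sum (f := fun k => |A i k|)
            (fun k _ => abs_nonneg _) (Finset.mem_univ j)
        have hcj : 0 < c j := by
          apply lt_of_lt_of_le (abs_pos.mpr hA)
          exact Finset.single_le_sum (f := fun k => |A k j|)
            (fun k _ => abs_nonneg _) (Finset.mem_univ i)
        have hmem : r i * c j ∈ T := ⟨i, j, hA, rfl⟩
        have hle : r i * c j ≤ M := le_csSup hTbdd hmem
        have h := amgm_aux (x j) (y i) (r i) (c j) M hri hcj hle
        calc |A i j * x j * y i| = |A i j| * (|x j| * |y i|) := by
              rw [abs_mul, abs_mul]; ring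
          _ ≤ |A i j| * ((Real.sqrt M / 2) * (x j ^ 2 / c j + y i ^ 2 / r i)) :=
              mul_le_mul_of_nonneg_left h (abs_nonneg _)
          _ = (Real.sqrt M / 2) * (|A i j| * x j ^ 2 / c j + |A i j| * y i ^ 2 / r i) := by
              ring
    have swap : ∀ (f g : Fin m → Fin n → ℝ),
        ∑ i, ∑ j, (Real.sqrt M / 2) * (f i j + g i j) =
        (Real.sqrt M / 2) * ((∑ j, ∑ i, f i j) + ∑ i, ∑ j, g i j) := by
      intro f g
      simp only [mul_add, Finset.sum_add_distrib, ← Finset.mul_sum]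
      rw [Finset.sum_comm]
    calc |∑ i, ∑ j, A i j * x j * y i| ≤ ∑ i, |∑ j, A i j * x j * y i| :=
          Finset.abs_sum_le_sum_abs _ _
      _ ≤ ∑ i, ∑ j, |A i j * x j * y i| :=
          Finset.sum_le_sum fun i _ => Finset.abs_sum_le_sum_abs _ _
      _ ≤ ∑ i, ∑ j, (Real.sqrt M / 2) *
            (|A i j| * x j ^ 2 / c j + |A i j| * y i ^ 2 / r i) :=
          Finset.sum_le_sum fun i _ => Finset.sum_le_sum fun j _ => term_bd i j
      _ = (Real.sqrt M / 2) *
            ((∑ j, ∑ i, |A i j| * x j ^ 2 / c j) + ∑ i, ∑ j, |A i j| * y i ^ 2 / r i) :=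
          swap _ _
      _ ≤ (Real.sqrt M / 2) * (1 + 1) := by
          apply mul_le_mul_of_nonneg_left _ (by positivity)
          have h1 : (∑ j, ∑ i, |A i j| * x j ^ 2 / c j) ≤ 1 := by
            rw [← hx]
            apply Finset.sum_le_sum
            intro j _
            have e : ∑ i, |A i j| * x j ^ 2 / c j = c j * x j ^ 2 / c j := by
              rw [← Finset.sum_div, ← Finset.sum_mul]
            rw [e]
            by_cases hcj : c j = 0
            · rw [hcj]; simp [sq_nonneg]
            · rw [mul_comm, mul_div_assoc, div_self hcj, mul_one]
          have h2 : (∑ i, ∑ j, |A i j| * y i ^ 2 / r i) ≤ 1 := by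
            rw [← hy]
            apply Finset.sum_le_sum
            intro i _
            have e : ∑ j, |A i j| * y i ^ 2 / r i = r i * y i ^ 2 / r i := by
              rw [← Finset.sum_div, ← Finset.sum_mul]
            rw [e]
            by_cases hri : r i = 0
            · rw [hri]; simp [sq_nonneg]
            · rw [mul_comm, mul_div_assoc, div_self hri, mul_one]
          linarith
      _ = Real.sqrt M := by ring
  have hSle : sSup {t : ℝ | ∃ (x : Fin n → ℝ) (y : Fin m → ℝ),
      (∑ j, x j ^ 2) = 1 ∧ (∑ i, y i ^ 2) = 1 ∧
      t = |∑ i, ∑ j, A i j * x j * y i|} ≤ Real.sqrt M := by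
    apply Real.sSup_le
    · rintro t ⟨x, y, hx, hy, rfl⟩
      exact main x y hx hy
    · exact Real.sqrt_nonneg _
  have hSnn : 0 ≤ sSup {t : ℝ | ∃ (x : Fin n → ℝ) (y : Fin m → ℝ),
      (∑ j, x j ^ 2) = 1 ∧ (∑ i, y i ^ 2) = 1 ∧
      t = |∑ i, ∑ j, A i j * x j * y i|} := by
    apply Real.sSup_nonneg
    rintro t ⟨x, y, hx, hy, rfl⟩
    exact abs_nonneg _
  calc (sSup _) ^ 2 ≤ (Real.sqrt M) ^ 2 := by
        apply sq_le_sq' _ hSle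
        linarith [Real.sqrt_nonneg M]
    _ = M := Real.sq_sqrt hM0
end

section
/- Let A be a real m×n matrix and let B be the symmetric (m+n)×(m+n) block matrix with blocks [[0, A],[Aᵀ, 0]]. Then for any p > 1, the maximum of |xᵀ B x| over real vectors x with ‖x‖_p = 1 is at most (2/2^{2/p}) ‖A‖_p, where ‖A‖_p = sup { |yᵀ A z| : ‖y‖_p = ‖z‖_p = 1 }. -/
lemma coord_le_one {k : ℕ} (p : ℝ) (hp : 1 < p) (y : Fin k → ℝ)
    (hy : (∑ i, |y i| ^ p) = 1) (i : Fin k) : |y i| ≤ 1 := by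
  have hp0 : 0 < p := lt_trans one_pos hp
  have h1 : |y i| ^ p ≤ 1 := by
    rw [← hy]
    exact Finset.single_le_sum (fun j _ => Real.rpow_nonneg (abs_nonneg _) p)
      (Finset.mem_univ i)
  have := Real.rpow_le_rpow (Real.rpow_nonneg (abs_nonneg _) p) h1
    (le_of_lt (by positivity : (0:ℝ) < 1/p))
  rwa [Real.one_rpow, ← Real.rpow_mul (abs_nonneg _),
    mul_one_div, div_self (ne_of_gt hp0), Real.rpow_one] at this

lemma opset_bdd (m n : ℕ) (A : Matrix (Fin m) (Fin n) ℝ) (p : ℝ) (hp : 1 < p) :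
    BddAbove {t : ℝ | ∃ (y : Fin m → ℝ) (z : Fin n → ℝ),
        (∑ i, |y i| ^ p) = 1 ∧ (∑ j, |z j| ^ p) = 1 ∧
        t = |∑ i, ∑ j, y i * A i j * z j|} := by
  refine ⟨∑ i, ∑ j, |A i j|, ?_⟩
  rintro t ⟨y, z, hy, hz, rfl⟩
  calc |∑ i, ∑ j, y i * A i j * z j| ≤ ∑ i, ∑ j, |y i * A i j * z j| := by
        refine le_trans (Finset.abs_sum_le_sum_abs _ _) ?_
        exact Finset.sum_le_sum fun i _ => Finset.abs_sum_le_sum_abs _ _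
    _ ≤ ∑ i, ∑ j, |A i j| := by
        refine Finset.sum_le_sum fun i _ => Finset.sum_le_sum fun j _ => ?_
        rw [abs_mul, abs_mul]
        calc |y i| * |A i j| * |z j| ≤ 1 * |A i j| * |z j| :=
              mul_le_mul_of_nonneg_right
                (mul_le_mul_of_nonneg_right (coord_le_one p hp y hy i) (abs_nonneg _))
                (abs_nonneg _)
          _ ≤ 1 * |A i j| * 1 :=
              mul_le_mul_of_nonneg_left (coord_le_one p hp z hz j)
                (by positivity)
          _ = |A i j| := by ring

/-- η^{(p)}(sym(A)) ≤ (2 / 2^{2/p}) ‖A‖_p for the symmetrant of A. -/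
theorem stmt_8 (m n : ℕ) (A : Matrix (Fin m) (Fin n) ℝ) (p : ℝ) (hp : 1 < p) :
    sSup {t : ℝ | ∃ x : (Fin m ⊕ Fin n) → ℝ,
        (∑ i, |x i| ^ p) = 1 ∧
        t = |∑ i, ∑ j, Matrix.fromBlocks (0 : Matrix (Fin m) (Fin m) ℝ) A
              A.transpose (0 : Matrix (Fin n) (Fin n) ℝ) i j * x i * x j|} ≤
    (2 / 2 ^ ((2 : ℝ) / p)) *
      sSup {t : ℝ | ∃ (y : Fin m → ℝ) (z : Fin n → ℝ),
        (∑ i, |y i| ^ p) = 1 ∧ (∑ j, |z j| ^ p) = 1 ∧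
        t = |∑ i, ∑ j, y i * A i j * z j|} := by
  have hp0 : 0 < p := lt_trans one_pos hp
  set S := sSup {t : ℝ | ∃ (y : Fin m → ℝ) (z : Fin n → ℝ),
        (∑ i, |y i| ^ p) = 1 ∧ (∑ j, |z j| ^ p) = 1 ∧
        t = |∑ i, ∑ j, y i * A i j * z j|} with hS
  have hSnn : 0 ≤ S :=
    Real.sSup_nonneg (by rintro t ⟨y, z, _, _, rfl⟩; exact abs_nonneg _)
  have hc : (0:ℝ) < 2 / 2 ^ ((2:ℝ)/p) := by positivity
  refine Real.sSup_le ?_ (mul_nonneg (le_of_lt hc) hSnn)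
  rintro t ⟨x, hx, rfl⟩
  have hquad : (∑ i, ∑ j, Matrix.fromBlocks (0 : Matrix (Fin m) (Fin m) ℝ) A
        A.transpose (0 : Matrix (Fin n) (Fin n) ℝ) i j * x i * x j)
      = 2 * ∑ i, ∑ j, x (Sum.inl i) * A i j * x (Sum.inr j) := by
    simp only [Fintype.sum_sum_type, Matrix.fromBlocks_apply₁₁, Matrix.fromBlocks_apply₁₂,
      Matrix.fromBlocks_apply₂₁, Matrix.fromBlocks_apply₂₂, Matrix.zero_apply,
      Matrix.transpose_apply, zero_mul, Finset.sum_const_zero, zero_add, add_zero]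
    rw [two_mul]
    congr 1
    · exact Finset.sum_congr rfl fun i _ => Finset.sum_congr rfl fun j _ => by ring
    · rw [Finset.sum_comm]
      exact Finset.sum_congr rfl fun i _ => Finset.sum_congr rfl fun j _ => by ring
  set u : Fin m → ℝ := fun i => x (Sum.inl i) with hu
  set v : Fin n → ℝ := fun j => x (Sum.inr j) with hv
  set P := ∑ i, |u i| ^ p with hP
  set Q := ∑ j, |v j| ^ p with hQ
  have hPQ : P + Q = 1 := by
    rw [hP, hQ, ← hx, Fintype.sum_sum_type]
  have hPnn : 0 ≤ P := Finset.sum_nonneg fun i _ => Real.rpow_nonneg (abs_nonneg _) p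
  have hQnn : 0 ≤ Q := Finset.sum_nonneg fun j _ => Real.rpow_nonneg (abs_nonneg _) p
  rw [hquad]
  rcases eq_or_lt_of_le hPnn with hP0 | hPpos
  · have hu0 : ∀ i, u i = 0 := by
      intro i
      have h := (Finset.sum_eq_zero_iff_of_nonneg
        (fun j _ => Real.rpow_nonneg (abs_nonneg _) p)).1 hP0.symm i (Finset.mem_univ i)
      have := (Real.rpow_eq_zero (abs_nonneg _) (ne_of_gt hp0)).1 h
      simpa [abs_eq_zero] using this
    have hz0 : (∑ i, ∑ j, u i * A i j * v j) = 0 :=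
      Finset.sum_eq_zero fun i _ => Finset.sum_eq_zero fun j _ => by rw [hu0 i]; ring
    rw [hz0, mul_zero, abs_zero]
    exact mul_nonneg (le_of_lt hc) hSnn
  rcases eq_or_lt_of_le hQnn with hQ0 | hQpos
  · have hv0 : ∀ j, v j = 0 := by
      intro j
      have h := (Finset.sum_eq_zero_iff_of_nonneg
        (fun i _ => Real.rpow_nonneg (abs_nonneg _) p)).1 hQ0.symm j (Finset.mem_univ j)
      have := (Real.rpow_eq_zero (abs_nonneg _) (ne_of_gt hp0)).1 h
      simpa [abs_eq_zero] using this
    have hz0 : (∑ i, ∑ j, u i * A i j * v j) = 0 :=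
      Finset.sum_eq_zero fun i _ => Finset.sum_eq_zero fun j _ => by rw [hv0 j]; ring
    rw [hz0, mul_zero, abs_zero]
    exact mul_nonneg (le_of_lt hc) hSnn
  set a := P ^ ((1:ℝ)/p) with ha
  set b := Q ^ ((1:ℝ)/p) with hb
  have hapos : 0 < a := Real.rpow_pos_of_pos hPpos _
  have hbpos : 0 < b := Real.rpow_pos_of_pos hQpos _
  have hap : a ^ p = P := by
    rw [ha, ← Real.rpow_mul (le_of_lt hPpos), one_div_mul_cancel (ne_of_gt hp0), Real.rpow_one]
  have hbp : b ^ p = Q := by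
    rw [hb, ← Real.rpow_mul (le_of_lt hQpos), one_div_mul_cancel (ne_of_gt hp0), Real.rpow_one]
  set y : Fin m → ℝ := fun i => u i / a with hy
  set z : Fin n → ℝ := fun j => v j / b with hz
  have hyfeas : (∑ i, |y i| ^ p) = 1 := by
    have heach : ∀ i, |y i| ^ p = |u i| ^ p / P := by
      intro i
      rw [hy]
      simp only
      rw [abs_div, abs_of_pos hapos, Real.div_rpow (abs_nonneg _) (le_of_lt hapos), hap]
    rw [Finset.sum_congr rfl fun i _ => heach i, ← Finset.sum_div, ← hP,
      div_self (ne_of_gt hPpos)]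
  have hzfeas : (∑ j, |z j| ^ p) = 1 := by
    have heach : ∀ j, |z j| ^ p = |v j| ^ p / Q := by
      intro j
      rw [hz]
      simp only
      rw [abs_div, abs_of_pos hbpos, Real.div_rpow (abs_nonneg _) (le_of_lt hbpos), hbp]
    rw [Finset.sum_congr rfl fun j _ => heach j, ← Finset.sum_div, ← hQ,
      div_self (ne_of_gt hQpos)]
  have hle : |∑ i, ∑ j, y i * A i j * z j| ≤ S :=
    le_csSup (opset_bdd m n A p hp) ⟨y, z, hyfeas, hzfeas, rfl⟩
  have hsum : (∑ i, ∑ j, u i * A i j * v j) = a * b * ∑ i, ∑ j, y i * A i j * z j := by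
    rw [Finset.mul_sum]
    refine Finset.sum_congr rfl fun i _ => ?_
    rw [Finset.mul_sum]
    refine Finset.sum_congr rfl fun j _ => ?_
    rw [hy, hz]
    field_simp
  have hab0 : (0:ℝ) ≤ a * b := le_of_lt (mul_pos hapos hbpos)
  have hab : a * b ≤ ((2:ℝ) ^ ((2:ℝ)/p))⁻¹ := by
    have habp : (a*b) ^ p ≤ (1:ℝ)/4 := by
      rw [Real.mul_rpow (le_of_lt hapos) (le_of_lt hbpos), hap, hbp]
      nlinarith [sq_nonneg (P - Q)]
    have h := Real.rpow_le_rpow (Real.rpow_nonneg hab0 p) habp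
      (le_of_lt (by positivity : (0:ℝ) < 1/p))
    rw [← Real.rpow_mul hab0, mul_one_div, div_self (ne_of_gt hp0), Real.rpow_one] at h
    have h4 : (2:ℝ) ^ (2:ℝ) = 4 := by
      rw [show (2:ℝ) = ((2:ℕ):ℝ) by norm_num, Real.rpow_natCast]; norm_num
    have h14 : ((1:ℝ)/4) ^ ((1:ℝ)/p) = ((2:ℝ) ^ ((2:ℝ)/p))⁻¹ := by
      rw [show ((1:ℝ)/4) = ((2:ℝ)^(2:ℝ))⁻¹ by rw [h4]; norm_num,
        ← Real.rpow_neg (by norm_num : (0:ℝ) ≤ 2), ← Real.rpow_mul (by norm_num : (0:ℝ) ≤ 2),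
        ← Real.rpow_neg (by norm_num : (0:ℝ) ≤ 2)]
      ring_nf
    rwa [h14] at h
  rw [hsum]
  have habs : |2 * (a * b * ∑ i, ∑ j, y i * A i j * z j)|
      = 2 * ((a*b) * |∑ i, ∑ j, y i * A i j * z j|) := by
    rw [abs_mul, abs_mul, abs_two, abs_of_nonneg hab0]
  rw [habs]
  calc 2 * ((a*b) * |∑ i, ∑ j, y i * A i j * z j|)
      ≤ 2 * (((2:ℝ) ^ ((2:ℝ)/p))⁻¹ * S) := by
        refine mul_le_mul_of_nonneg_left ?_ (by norm_num)
        exact mul_le_mul hab hle (abs_nonneg _) (by positivity)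
    _ = (2 / 2 ^ ((2:ℝ)/p)) * S := by rw [div_eq_mul_inv]; ring
end

section
/- Let A be a nonnegative real m×n matrix and B = [[0, A],[Aᵀ, 0]] its symmetrant. Then for any p > 1, max { |xᵀ B x| : ‖x‖_p = 1 } = 2^{1−2/p} · ‖A‖_p, where ‖A‖_p = max { yᵀ A z : ‖y‖_p = ‖z‖_p = 1 }. -/
lemma aux_abs_le_one {ι : Type*} [Fintype ι] (p : ℝ) (hp : 0 < p) (x : ι → ℝ)
    (h : ∑ i, |x i| ^ p = 1) (i : ι) : |x i| ≤ 1 := by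
  have h1 : |x i| ^ p ≤ 1 := by
    rw [← h]
    exact Finset.single_le_sum (fun j _ => Real.rpow_nonneg (abs_nonneg _) p) (Finset.mem_univ i)
  by_contra hc
  push_neg at hc
  have h2 : 1 < |x i| ^ p :=
    (Real.one_lt_rpow_iff_of_pos (lt_trans one_pos hc)).mpr (Or.inl ⟨hc, hp⟩)
  linarith

lemma aux_eq_zero {ι : Type*} [Fintype ι] (p : ℝ) (hp : 0 < p) (x : ι → ℝ)
    (h : ∑ i, |x i| ^ p = 0) (i : ι) : x i = 0 := by
  have h1 := (Finset.sum_eq_zero_iff_of_nonneg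
    (fun j _ => Real.rpow_nonneg (abs_nonneg (x j)) p)).mp h i (Finset.mem_univ i)
  have := (Real.rpow_eq_zero (abs_nonneg _) (ne_of_gt hp)).mp h1
  simpa using this

lemma quad_expand (m n : ℕ) (A : Matrix (Fin m) (Fin n) ℝ) (x : (Fin m ⊕ Fin n) → ℝ) :
    ∑ i, ∑ j, Matrix.fromBlocks (0 : Matrix (Fin m) (Fin m) ℝ) A
        A.transpose (0 : Matrix (Fin n) (Fin n) ℝ) i j * x i * x j
      = 2 * ∑ i, ∑ j, A i j * x (Sum.inl i) * x (Sum.inr j) := by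
  rw [Fintype.sum_sum_type]
  simp only [Fintype.sum_sum_type, Matrix.fromBlocks_apply₁₁, Matrix.fromBlocks_apply₁₂,
    Matrix.fromBlocks_apply₂₁, Matrix.fromBlocks_apply₂₂, Matrix.zero_apply, zero_mul,
    Finset.sum_const_zero, Matrix.transpose_apply, zero_add, add_zero]
  have h : ∑ j, ∑ i, A i j * x (Sum.inr j) * x (Sum.inl i)
      = ∑ i, ∑ j, A i j * x (Sum.inl i) * x (Sum.inr j) := by
    rw [Finset.sum_comm]
    exact Finset.sum_congr rfl fun i _ => Finset.sum_congr rfl fun j _ => by ring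
  rw [h]; ring

/-- For nonnegative A, η^{(p)}(sym(A)) = 2^{1-2/p} ‖A‖_p. -/
theorem stmt_9 (m n : ℕ) (A : Matrix (Fin m) (Fin n) ℝ)
    (hA : ∀ i j, 0 ≤ A i j) (p : ℝ) (hp : 1 < p) :
    sSup {t : ℝ | ∃ x : (Fin m ⊕ Fin n) → ℝ,
        (∑ i, |x i| ^ p) = 1 ∧
        t = |∑ i, ∑ j, Matrix.fromBlocks (0 : Matrix (Fin m) (Fin m) ℝ) A
              A.transpose (0 : Matrix (Fin n) (Fin n) ℝ) i j * x i * x j|} =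
    (2 : ℝ) ^ (1 - 2 / p) *
      sSup {t : ℝ | ∃ (y : Fin m → ℝ) (z : Fin n → ℝ),
        (∑ i, |y i| ^ p) = 1 ∧ (∑ j, |z j| ^ p) = 1 ∧
        t = ∑ i, ∑ j, y i * A i j * z j} := by
  have hp0 : 0 < p := lt_trans one_pos hp
  have hp0' : p ≠ 0 := ne_of_gt hp0
  have hip : 0 < 1 / p := by positivity
  set S1 : Set ℝ := {t : ℝ | ∃ x : (Fin m ⊕ Fin n) → ℝ,
        (∑ i, |x i| ^ p) = 1 ∧
        t = |∑ i, ∑ j, Matrix.fromBlocks (0 : Matrix (Fin m) (Fin m) ℝ) A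
              A.transpose (0 : Matrix (Fin n) (Fin n) ℝ) i j * x i * x j|} with hS1def
  set S2 : Set ℝ := {t : ℝ | ∃ (y : Fin m → ℝ) (z : Fin n → ℝ),
        (∑ i, |y i| ^ p) = 1 ∧ (∑ j, |z j| ^ p) = 1 ∧
        t = ∑ i, ∑ j, y i * A i j * z j} with hS2def
  set M : ℝ := sSup S2 with hMdef
  set c : ℝ := (2 : ℝ) ^ (1 - 2 / p) with hcdef
  have hc_pos : 0 < c := Real.rpow_pos_of_pos two_pos _
  -- S2 is bounded above
  have hBdd : BddAbove S2 := by
    refine ⟨∑ i, ∑ j, A i j, fun t ht => ?_⟩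
    obtain ⟨y, z, hy, hz, rfl⟩ := ht
    refine Finset.sum_le_sum fun i _ => Finset.sum_le_sum fun j _ => ?_
    have h1 : y i * A i j * z j ≤ |y i| * A i j * |z j| := by
      calc y i * A i j * z j ≤ |y i * A i j * z j| := le_abs_self _
        _ = |y i| * A i j * |z j| := by rw [abs_mul, abs_mul, abs_of_nonneg (hA i j)]
    have h2 : |y i| * A i j * |z j| ≤ 1 * A i j * 1 := by
      have hy1 := aux_abs_le_one p hp0 y hy i
      have hz1 := aux_abs_le_one p hp0 z hz j
      have hm : |y i| * |z j| ≤ 1 := by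
        nlinarith [mul_le_mul hy1 hz1 (abs_nonneg (z j)) zero_le_one]
      calc |y i| * A i j * |z j| = A i j * (|y i| * |z j|) := by ring
        _ ≤ A i j * 1 := mul_le_mul_of_nonneg_left hm (hA i j)
        _ = 1 * A i j * 1 := by ring
    linarith
  -- M ≥ 0
  have hM0 : 0 ≤ M := by
    by_cases hS : S2.Nonempty
    · obtain ⟨t, y, z, hy, hz, ht⟩ := hS
      have hmem : (∑ i, ∑ j, |y i| * A i j * |z j|) ∈ S2 := by
        refine ⟨fun i => |y i|, fun j => |z j|, ?_, ?_, rfl⟩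
        · simpa [abs_abs] using hy
        · simpa [abs_abs] using hz
      have h0 : 0 ≤ ∑ i, ∑ j, |y i| * A i j * |z j| := by
        refine Finset.sum_nonneg fun i _ => Finset.sum_nonneg fun j _ => ?_
        have := hA i j
        positivity
      exact le_trans h0 (le_csSup hBdd hmem)
    · rw [hMdef, Set.not_nonempty_iff_eq_empty.mp hS, Real.sSup_empty]
  -- upper bound for every element of S1
  have hup : ∀ t ∈ S1, t ≤ c * M := by
    rintro t ⟨x, hx, rfl⟩
    rw [quad_expand]
    set Y : Fin m → ℝ := fun i => |x (Sum.inl i)| with hYdef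
    set Z : Fin n → ℝ := fun j => |x (Sum.inr j)| with hZdef
    set s : ℝ := ∑ i, Y i ^ p with hsdef
    set u : ℝ := ∑ j, Z j ^ p with hudef
    have hs0 : 0 ≤ s := Finset.sum_nonneg fun i _ => Real.rpow_nonneg (abs_nonneg _) p
    have hu0 : 0 ≤ u := Finset.sum_nonneg fun j _ => Real.rpow_nonneg (abs_nonneg _) p
    have hsu : s + u = 1 := by rw [← hx, Fintype.sum_sum_type]
    have habs : |∑ i, ∑ j, A i j * x (Sum.inl i) * x (Sum.inr j)|
        ≤ ∑ i, ∑ j, A i j * Y i * Z j := by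
      calc |∑ i, ∑ j, A i j * x (Sum.inl i) * x (Sum.inr j)|
          ≤ ∑ i, |∑ j, A i j * x (Sum.inl i) * x (Sum.inr j)| :=
            Finset.abs_sum_le_sum_abs _ _
        _ ≤ ∑ i, ∑ j, A i j * Y i * Z j := by
            refine Finset.sum_le_sum fun i _ => ?_
            calc |∑ j, A i j * x (Sum.inl i) * x (Sum.inr j)|
                ≤ ∑ j, |A i j * x (Sum.inl i) * x (Sum.inr j)| :=
                  Finset.abs_sum_le_sum_abs _ _
              _ = ∑ j, A i j * Y i * Z j := by
                  refine Finset.sum_congr rfl fun j _ => ?_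
                  rw [abs_mul, abs_mul, abs_of_nonneg (hA i j)]
    have hkey : ∑ i, ∑ j, A i j * Y i * Z j ≤ (s * u) ^ (1/p) * M := by
      by_cases hs : s = 0
      · have hY0 : ∀ i, Y i = 0 := by
          intro i
          have := aux_eq_zero p hp0 (fun i => x (Sum.inl i)) (by simpa [hsdef] using hs) i
          simp [hYdef, this]
        have hL : ∑ i, ∑ j, A i j * Y i * Z j = 0 :=
          Finset.sum_eq_zero fun i _ => Finset.sum_eq_zero fun j _ => by simp [hY0 i]
        rw [hL, hs, zero_mul, Real.zero_rpow (ne_of_gt hip), zero_mul]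
      by_cases hu : u = 0
      · have hZ0 : ∀ j, Z j = 0 := by
          intro j
          have := aux_eq_zero p hp0 (fun j => x (Sum.inr j)) (by simpa [hudef] using hu) j
          simp [hZdef, this]
        have hL : ∑ i, ∑ j, A i j * Y i * Z j = 0 :=
          Finset.sum_eq_zero fun i _ => Finset.sum_eq_zero fun j _ => by simp [hZ0 j]
        rw [hL, hu, mul_zero, Real.zero_rpow (ne_of_gt hip), zero_mul]
      · have hs' : 0 < s := lt_of_le_of_ne hs0 (Ne.symm hs)
        have hu' : 0 < u := lt_of_le_of_ne hu0 (Ne.symm hu)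
        have hsp : 0 < s ^ (1/p) := Real.rpow_pos_of_pos hs' _
        have hup' : 0 < u ^ (1/p) := Real.rpow_pos_of_pos hu' _
        set y' : Fin m → ℝ := fun i => Y i / s ^ (1/p) with hy'def
        set z' : Fin n → ℝ := fun j => Z j / u ^ (1/p) with hz'def
        have hrs : (s ^ (1/p)) ^ p = s := by
          rw [← Real.rpow_mul hs0, one_div, inv_mul_cancel₀ hp0', Real.rpow_one]
        have hru : (u ^ (1/p)) ^ p = u := by
          rw [← Real.rpow_mul hu0, one_div, inv_mul_cancel₀ hp0', Real.rpow_one]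
        have hy'1 : ∑ i, |y' i| ^ p = 1 := by
          have : ∀ i, |y' i| ^ p = Y i ^ p / s := by
            intro i
            rw [hy'def]
            rw [abs_div, abs_of_nonneg (abs_nonneg _), abs_of_pos hsp,
              Real.div_rpow (abs_nonneg _) (le_of_lt hsp), hrs]
          simp only [this]
          rw [← Finset.sum_div, ← hsdef, div_self hs]
        have hz'1 : ∑ j, |z' j| ^ p = 1 := by
          have : ∀ j, |z' j| ^ p = Z j ^ p / u := by
            intro j
            rw [hz'def]
            rw [abs_div, abs_of_nonneg (abs_nonneg _), abs_of_pos hup',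
              Real.div_rpow (abs_nonneg _) (le_of_lt hup'), hru]
          simp only [this]
          rw [← Finset.sum_div, ← hudef, div_self hu]
        have hvM : (∑ i, ∑ j, y' i * A i j * z' j) ≤ M :=
          le_csSup hBdd ⟨y', z', hy'1, hz'1, rfl⟩
        have hfac : ∑ i, ∑ j, A i j * Y i * Z j
            = s ^ (1/p) * u ^ (1/p) * ∑ i, ∑ j, y' i * A i j * z' j := by
          simp only [Finset.mul_sum]
          refine Finset.sum_congr rfl fun i _ => Finset.sum_congr rfl fun j _ => ?_
          have hYi : Y i = s ^ (1/p) * y' i := by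
            rw [hy'def, mul_comm, div_mul_cancel₀ _ (ne_of_gt hsp)]
          have hZj : Z j = u ^ (1/p) * z' j := by
            rw [hz'def, mul_comm, div_mul_cancel₀ _ (ne_of_gt hup')]
          rw [hYi, hZj]; ring
        rw [hfac, Real.mul_rpow hs0 hu0]
        exact mul_le_mul_of_nonneg_left hvM (by positivity)
    have hsu4 : s * u ≤ 1/4 := by nlinarith [sq_nonneg (s - u)]
    have h14 : (s * u) ^ (1/p) ≤ ((1:ℝ)/4) ^ (1/p) :=
      Real.rpow_le_rpow (mul_nonneg hs0 hu0) hsu4 (le_of_lt hip)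
    have hc2 : 2 * ((1:ℝ)/4) ^ (1/p) = c := by
      have e1 : ((1:ℝ)/4) = (2:ℝ) ^ (-2 : ℝ) := by
        rw [show ((-2:ℝ)) = ((-2 : ℤ) : ℝ) by norm_num, Real.rpow_intCast]
        norm_num
      rw [e1, ← Real.rpow_mul (by norm_num : (0:ℝ) ≤ 2), hcdef,
        show (1 - 2/p) = 1 + (-2) * (1/p) by ring, Real.rpow_add two_pos, Real.rpow_one]
    calc |2 * ∑ i, ∑ j, A i j * x (Sum.inl i) * x (Sum.inr j)|
        = 2 * |∑ i, ∑ j, A i j * x (Sum.inl i) * x (Sum.inr j)| := by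
          rw [abs_mul, abs_of_pos two_pos]
      _ ≤ 2 * ((s * u) ^ (1/p) * M) := by
          have := le_trans habs hkey
          linarith
      _ ≤ 2 * (((1:ℝ)/4) ^ (1/p) * M) := by
          have := mul_le_mul_of_nonneg_right h14 hM0
          linarith
      _ = c * M := by rw [← hc2]; ring
  -- sSup S1 ≤ c * M
  have hub : sSup S1 ≤ c * M := Real.sSup_le hup (by positivity)
  have hBddS1 : BddAbove S1 := ⟨c * M, hup⟩
  -- lower bound
  have hlow : c * M ≤ sSup S1 := by
    by_cases hS : S2.Nonempty
    · have hkey : ∀ t ∈ S2, t ≤ sSup S1 / c := by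
        rintro t ⟨y, z, hy, hz, rfl⟩
        set d : ℝ := (2:ℝ) ^ (-(1/p)) with hddef
        have hd : 0 < d := Real.rpow_pos_of_pos two_pos _
        have hdp : d ^ p = 1/2 := by
          rw [hddef, ← Real.rpow_mul (by norm_num : (0:ℝ) ≤ 2),
            show (-(1/p)) * p = -1 by field_simp,
            show ((-1:ℝ)) = ((-1 : ℤ) : ℝ) by norm_num, Real.rpow_intCast]
          norm_num
        set x : (Fin m ⊕ Fin n) → ℝ :=
          Sum.elim (fun i => d * y i) (fun j => d * z j) with hxdef
        have hterm : ∀ w : ℝ, |d * w| ^ p = (1/2) * |w| ^ p := by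
          intro w
          rw [abs_mul, Real.mul_rpow (abs_nonneg d) (abs_nonneg w), abs_of_pos hd, hdp]
        have hxnorm : ∑ i, |x i| ^ p = 1 := by
          rw [Fintype.sum_sum_type]
          simp only [hxdef, Sum.elim_inl, Sum.elim_inr, hterm]
          rw [← Finset.mul_sum, ← Finset.mul_sum, hy, hz]
          norm_num
        have hval : ∑ i, ∑ j, A i j * x (Sum.inl i) * x (Sum.inr j)
            = d ^ 2 * ∑ i, ∑ j, y i * A i j * z j := by
          simp only [hxdef, Sum.elim_inl, Sum.elim_inr, Finset.mul_sum]
          refine Finset.sum_congr rfl fun i _ => Finset.sum_congr rfl fun j _ => by ring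
        have hmem : |2 * (d ^ 2 * ∑ i, ∑ j, y i * A i j * z j)| ∈ S1 := by
          refine ⟨x, hxnorm, ?_⟩
          rw [quad_expand, hval]
        have hN : |2 * (d ^ 2 * ∑ i, ∑ j, y i * A i j * z j)| ≤ sSup S1 :=
          le_csSup hBddS1 hmem
        have hcd : 2 * d ^ 2 = c := by
          rw [sq, hddef, hcdef,
            show (1 - 2/p) = 1 + (-(1/p) + -(1/p)) by ring,
            Real.rpow_add two_pos, Real.rpow_add two_pos, Real.rpow_one]
        have habs2 : c * (∑ i, ∑ j, y i * A i j * z j)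
            ≤ |2 * (d ^ 2 * ∑ i, ∑ j, y i * A i j * z j)| := by
          calc c * (∑ i, ∑ j, y i * A i j * z j)
              ≤ |c * (∑ i, ∑ j, y i * A i j * z j)| := le_abs_self _
            _ = |2 * (d ^ 2 * ∑ i, ∑ j, y i * A i j * z j)| := by
                rw [← hcd]; congr 1; ring
        rw [le_div_iff₀ hc_pos]
        calc (∑ i, ∑ j, y i * A i j * z j) * c
            = c * (∑ i, ∑ j, y i * A i j * z j) := by ring
          _ ≤ |2 * (d ^ 2 * ∑ i, ∑ j, y i * A i j * z j)| := habs2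
          _ ≤ sSup S1 := hN
      have hMle : M ≤ sSup S1 / c := csSup_le hS hkey
      calc c * M ≤ c * (sSup S1 / c) := mul_le_mul_of_nonneg_left hMle (le_of_lt hc_pos)
        _ = sSup S1 := by field_simp
    · have hM : M = 0 := by
        rw [hMdef, Set.not_nonempty_iff_eq_empty.mp hS, Real.sSup_empty]
      rw [hM, mul_zero]
      exact Real.sSup_nonneg fun t ht => by obtain ⟨x, hx, rfl⟩ := ht; exact abs_nonneg _
  linarith
end

section
/- Let p > 1 and let B be a real symmetric n×n matrix whose index set splits as [n] = N₁ ∪ N₂ such that b_{ij} = 0 whenever i,j both lie in N₁ or both lie in N₂ (i.e., B is bipartite). If x is a unit l^p vector achieving the maximum of |xᵀBx|, then the restriction of x to each part Nᵢ has l^p-norm equal to 2^{−1/p}. -/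
/-- For a bipartite symmetric matrix, any l^p-maximizer of |xᵀBx|
has restriction to each part of l^p-norm 2^{-1/p}. -/
theorem stmt_10 (n : ℕ) (p : ℝ) (hp : 1 < p) (B : Matrix (Fin n) (Fin n) ℝ)
    (hsym : B.IsSymm) (S : Finset (Fin n))
    (hbip : ∀ i j, ((i ∈ S) ↔ (j ∈ S)) → B i j = 0)
    (x : Fin n → ℝ) (hx : (∑ i, |x i| ^ p) = 1)
    (hmax : |∑ i, ∑ j, B i j * x i * x j| =
      sSup {t : ℝ | ∃ y : Fin n → ℝ, (∑ i, |y i| ^ p) = 1 ∧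
        t = |∑ i, ∑ j, B i j * y i * y j|})
    (hpos : 0 < |∑ i, ∑ j, B i j * x i * x j|) :
    (∑ i ∈ S, |x i| ^ p) ^ (1 / p) = (2 : ℝ) ^ (-(1 / p)) ∧
    (∑ i ∈ Sᶜ, |x i| ^ p) ^ (1 / p) = (2 : ℝ) ^ (-(1 / p)) := by
  have hp0 : (0:ℝ) < p := by linarith
  set a := ∑ i ∈ S, |x i| ^ p with ha
  set b := ∑ i ∈ Sᶜ, |x i| ^ p with hb
  have hterm : ∀ i : Fin n, (0:ℝ) ≤ |x i| ^ p := fun i => Real.rpow_nonneg (abs_nonneg _) _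
  have hab : a + b = 1 := by
    rw [ha, hb, Finset.sum_add_sum_compl]; exact hx
  -- boundedness of the set
  have hmem : |∑ i, ∑ j, B i j * x i * x j| ∈
      {t : ℝ | ∃ y : Fin n → ℝ, (∑ i, |y i| ^ p) = 1 ∧
        t = |∑ i, ∑ j, B i j * y i * y j|} := ⟨x, hx, rfl⟩
  have hbdd : BddAbove {t : ℝ | ∃ y : Fin n → ℝ, (∑ i, |y i| ^ p) = 1 ∧
        t = |∑ i, ∑ j, B i j * y i * y j|} := by
    by_contra h
    rw [Real.sSup_of_not_bddAbove h] at hmax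
    linarith
  have hle : ∀ y : Fin n → ℝ, (∑ i, |y i| ^ p) = 1 →
      |∑ i, ∑ j, B i j * y i * y j| ≤ |∑ i, ∑ j, B i j * x i * x j| := by
    intro y hy
    rw [hmax]
    exact le_csSup hbdd ⟨y, hy, rfl⟩
  -- a > 0
  have hapos : 0 < a := by
    rcases (Finset.sum_nonneg (fun i _ => hterm i)).lt_or_eq with h | h
    · exact h
    · exfalso
      have hz : ∀ i ∈ S, x i = 0 := by
        intro i hi
        have := (Finset.sum_eq_zero_iff_of_nonneg (fun i _ => hterm i)).mp h.symm i hi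
        have h0 : |x i| = 0 := by
          by_contra hne
          exact absurd this (ne_of_gt (Real.rpow_pos_of_pos ((abs_nonneg _).lt_of_ne (Ne.symm hne)) _))
        simpa using h0
      have : (∑ i, ∑ j, B i j * x i * x j) = 0 := by
        apply Finset.sum_eq_zero; intro i _
        apply Finset.sum_eq_zero; intro j _
        by_cases hi : i ∈ S
        · rw [hz i hi]; ring
        · by_cases hj : j ∈ S
          · rw [hz j hj]; ring
          · rw [hbip i j (by simp [hi, hj])]; ring
      rw [this] at hpos; simp at hpos
  have hbpos : 0 < b := by
    rcases (Finset.sum_nonneg (fun i _ => hterm i)).lt_or_eq with h | h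
    · exact h
    · exfalso
      have hz : ∀ i ∈ Sᶜ, x i = 0 := by
        intro i hi
        have := (Finset.sum_eq_zero_iff_of_nonneg (fun i _ => hterm i)).mp h.symm i hi
        have h0 : |x i| = 0 := by
          by_contra hne
          exact absurd this (ne_of_gt (Real.rpow_pos_of_pos ((abs_nonneg _).lt_of_ne (Ne.symm hne)) _))
        simpa using h0
      have : (∑ i, ∑ j, B i j * x i * x j) = 0 := by
        apply Finset.sum_eq_zero; intro i _
        apply Finset.sum_eq_zero; intro j _
        by_cases hi : i ∈ S
        · by_cases hj : j ∈ S
          · rw [hbip i j (by simp [hi, hj])]; ring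
          · rw [hz j (by simpa using hj)]; ring
        · rw [hz i (by simpa using hi)]; ring
      rw [this] at hpos; simp at hpos
  -- main claim : a = 1/2
  have hkey : a = 1/2 := by
    by_contra hne
    have hne2 : a - 1/2 ≠ 0 := sub_ne_zero.mpr hne
    have hsq : 0 < (a - 1/2)^2 := by positivity
    have habprod : a * b < 1/4 := by nlinarith
    set s := (2*a) ^ (-(1/p)) with hs
    set t := (2*b) ^ (-(1/p)) with ht
    have hspos : 0 < s := Real.rpow_pos_of_pos (by linarith) _
    have htpos : 0 < t := Real.rpow_pos_of_pos (by linarith) _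
    set y : Fin n → ℝ := fun i => if i ∈ S then s * x i else t * x i with hy
    have hpp : -(1/p) * p = -1 := by field_simp
    have hsp : s ^ p = (2*a)⁻¹ := by
      rw [hs, ← Real.rpow_mul (by linarith), hpp, Real.rpow_neg_one]
    have htp : t ^ p = (2*b)⁻¹ := by
      rw [ht, ← Real.rpow_mul (by linarith), hpp, Real.rpow_neg_one]
    have hynorm : (∑ i, |y i| ^ p) = 1 := by
      rw [← Finset.sum_add_sum_compl S]
      have h1 : ∑ i ∈ S, |y i| ^ p = s ^ p * a := by
        rw [ha, Finset.mul_sum]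
        apply Finset.sum_congr rfl
        intro i hi
        have hyi : y i = s * x i := by simp [hy, hi]
        rw [hyi, abs_mul, abs_of_pos hspos, Real.mul_rpow hspos.le (abs_nonneg _)]
      have h2 : ∑ i ∈ Sᶜ, |y i| ^ p = t ^ p * b := by
        rw [hb, Finset.mul_sum]
        apply Finset.sum_congr rfl
        intro i hi
        have hi' : i ∉ S := by simpa using hi
        have hyi : y i = t * x i := by simp [hy, hi']
        rw [hyi, abs_mul, abs_of_pos htpos, Real.mul_rpow htpos.le (abs_nonneg _)]
      rw [h1, h2, hsp, htp]
      field_simp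
      ring
    have hQy : (∑ i, ∑ j, B i j * y i * y j)
        = s * t * (∑ i, ∑ j, B i j * x i * x j) := by
      rw [Finset.mul_sum]
      apply Finset.sum_congr rfl; intro i _
      rw [Finset.mul_sum]
      apply Finset.sum_congr rfl; intro j _
      by_cases hi : i ∈ S <;> by_cases hj : j ∈ S
      · rw [hbip i j (by simp [hi, hj])]; ring
      · have h1 : y i = s * x i := by simp [hy, hi]
        have h2 : y j = t * x j := by simp [hy, hj]
        rw [h1, h2]; ring
      · have h1 : y i = t * x i := by simp [hy, hi]
        have h2 : y j = s * x j := by simp [hy, hj]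
        rw [h1, h2]; ring
      · rw [hbip i j (by simp [hi, hj])]; ring
    have hst : 1 < s * t := by
      rw [hs, ht, ← Real.mul_rpow (by linarith) (by linarith)]
      rw [Real.one_lt_rpow_iff_of_pos (by nlinarith)]
      right
      refine ⟨by nlinarith, ?_⟩
      rw [neg_lt_zero]
      positivity
    have hcontra := hle y hynorm
    rw [hQy, abs_mul, abs_of_pos (mul_pos hspos htpos)] at hcontra
    nlinarith
  have hkey2 : b = 1/2 := by linarith
  constructor
  · rw [hkey]
    rw [show (1/2 : ℝ) = 2⁻¹ by norm_num, ← Real.rpow_neg_one (2:ℝ),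
      ← Real.rpow_mul (by norm_num)]
    ring_nf
  · rw [hkey2]
    rw [show (1/2 : ℝ) = 2⁻¹ by norm_num, ← Real.rpow_neg_one (2:ℝ),
      ← Real.rpow_mul (by norm_num)]
    ring_nf
end

section
/- For p > 1, if A is a complex m×n matrix with ‖A‖_p = (∑_{i,j}|a_{ij}|^{p/(p−1)})^{(p−1)/p}, then A has rank one, i.e., there exist vectors u ∈ ℂᵐ, v ∈ ℂⁿ with a_{ij} = u_i v_j for all i, j. -/
open Finset ComplexConjugate

def lpUnitSphere (ι E : Type*) [Fintype ι] [Norm E] (p : ℝ) : Set (ι → E) :=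
  {x | ∑ i, ‖x i‖ ^ p = 1}

theorem isCompact_lpUnitSphere {ι E : Type*} [Fintype ι] [NormedAddCommGroup E] [ProperSpace E]
    {p : ℝ} (hp : 0 < p) : IsCompact (lpUnitSphere ι E p) := by
  refine Metric.isCompact_of_isClosed_isBounded (isClosed_eq ?_ continuous_const) ?_
  · exact continuous_finsetSum _ fun i _ =>
      (Real.continuous_rpow_const hp.le).comp (continuous_apply i).norm
  · refine (Metric.isBounded_closedBall (x := 0) (r := 1)).subset fun x hx => ?_
    rw [mem_closedBall_zero_iff, pi_norm_le_iff_of_nonneg zero_le_one]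
    intro i
    have : ‖x i‖ ^ p ≤ 1 :=
      hx ▸ single_le_sum (f := fun j => ‖x j‖ ^ p) (fun j _ => by positivity) (mem_univ i)
    exact le_of_not_gt fun h => (Real.one_lt_rpow h hp).not_ge this

theorem lpUnitSphere_nonempty {ι E : Type*} [Fintype ι] [Nonempty ι] [NormedRing E]
    [NormOneClass E] {p : ℝ} (hp : p ≠ 0) : (lpUnitSphere ι E p).Nonempty := by
  classical
  inhabit ι
  refine ⟨Pi.single default 1, ?_⟩
  rw [lpUnitSphere, Set.mem_ofPred_eq,
    Fintype.sum_eq_single default fun i hi => by simp [hi, Real.zero_rpow hp]]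
  simp

theorem exists_norm_sum_eq_specNorm {m n : ℕ} [Nonempty (Fin m)] [Nonempty (Fin n)] {p : ℝ}
    (hp : 0 < p) (A : Matrix (Fin m) (Fin n) ℂ) :
    ∃ x ∈ lpUnitSphere (Fin n) ℂ p, ∃ y ∈ lpUnitSphere (Fin m) ℂ p,
      ‖∑ i, ∑ j, A i j * x j * y i‖ = specNorm m n p A := by
  have hK := (isCompact_lpUnitSphere (ι := Fin n) (E := ℂ) hp).prod
    (isCompact_lpUnitSphere (ι := Fin m) (E := ℂ) hp)
  have hne := (lpUnitSphere_nonempty (ι := Fin n) (E := ℂ) hp.ne').prod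
    (lpUnitSphere_nonempty (ι := Fin m) (E := ℂ) hp.ne')
  have hcont : Continuous fun xy : (Fin n → ℂ) × (Fin m → ℂ) =>
      ‖∑ i, ∑ j, A i j * xy.1 j * xy.2 i‖ := by
    fun_prop
  obtain ⟨⟨x, y⟩, ⟨hx, hy⟩, h⟩ := (hK.image hcont).sSup_mem (hne.image _)
  refine ⟨x, hx, y, hy, h.trans (congrArg sSup ?_)⟩
  ext t
  constructor
  · rintro ⟨⟨x, y⟩, ⟨hx, hy⟩, rfl⟩; exact ⟨x, y, hx, hy, rfl⟩
  · rintro ⟨x, y, hx, hy, rfl⟩; exact ⟨(x, y), ⟨hx, hy⟩, rfl⟩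

theorem Complex.norm_sum_mul_eq_norm_mul_sum_of_norm_sum_eq {ι : Type*} [Fintype ι]
    {z : ι → ℂ} (h : ‖∑ i, z i‖ = ∑ i, ‖z i‖) (i : ι) :
    (‖∑ j, z j‖ : ℂ) * z i = ‖z i‖ * ∑ j, z j := by
  generalize hS : ∑ j, z j = S at h ⊢
  rcases eq_or_ne S 0 with rfl | hS0
  · simp
  have hle : ∀ k ∈ univ, (z k * conj S).re ≤ ‖z k * conj S‖ := fun k _ => re_le_norm _
  have hsum : ∑ k, (z k * conj S).re = ∑ k, ‖z k * conj S‖ := by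
    simp only [← re_sum, ← sum_mul, hS, mul_conj, norm_mul, RCLike.norm_conj, ← h,
      normSq_eq_norm_sq]
    norm_cast
    ring
  have hi : z i * conj S = ‖z i‖ * ‖S‖ := by
    have := eq_coe_norm_of_nonneg
      (re_eq_norm.1 ((sum_eq_sum_iff_of_le hle).1 hsum i (mem_univ i)))
    rwa [norm_mul, RCLike.norm_conj, ofReal_mul] at this
  apply mul_right_cancel₀ ((map_ne_zero conj).2 hS0)
  rw [mul_assoc, hi, mul_assoc, mul_conj, normSq_eq_norm_sq]
  push_cast
  ring

theorem rpow_eq_rpow_of_one_le_sum_mul {ι : Type*} [Fintype ι] {p q : ℝ}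
    (hpq : p.HolderConjugate q) {f g : ι → ℝ} (hf : ∀ i, 0 ≤ f i) (hg : ∀ i, 0 ≤ g i)
    (hf1 : ∑ i, f i ^ p = 1) (hg1 : ∑ i, g i ^ q = 1) (h : 1 ≤ ∑ i, f i * g i) (i : ι) :
    f i ^ p = g i ^ q := by
  have young : ∀ i ∈ univ, f i * g i ≤ f i ^ p / p + g i ^ q / q := fun i _ =>
    Real.young_inequality_of_nonneg (hf i) (hg i) hpq
  have young_sum : ∑ i, (f i ^ p / p + g i ^ q / q) = 1 := by
    rw [sum_add_distrib, ← sum_div, ← sum_div, hf1, hg1, one_div, one_div,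
      hpq.inv_add_inv_eq_one]
  have young_eq := (sum_eq_sum_iff_of_le young).1
    (le_antisymm (sum_le_sum young) (young_sum ▸ h)) i (mem_univ i)
  exact (Real.young_inequality_eq_iff_of_nonneg (hf i) (hg i) hpq).1 young_eq

theorem eq_mul_rpow_of_lpNorm_le_sum_mul {ι : Type*} [Fintype ι] {p q : ℝ}
    (hpq : p.HolderConjugate q) {f g : ι → ℝ} (hf : ∀ i, 0 ≤ f i) (hg : ∀ i, 0 ≤ g i)
    (hg1 : ∑ i, g i ^ p = 1) (h : (∑ i, f i ^ q) ^ (1 / q) ≤ ∑ i, f i * g i) (i : ι) :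
    f i = (∑ j, f j ^ q) ^ (1 / q) * g i ^ (p - 1) := by
  have hq := hpq.symm.pos
  have hsum0 : 0 ≤ ∑ j, f j ^ q := sum_nonneg fun j _ => Real.rpow_nonneg (hf j) q
  have hMq : ((∑ j, f j ^ q) ^ (1 / q)) ^ q = ∑ j, f j ^ q := by
    rw [one_div, Real.rpow_inv_rpow hsum0 hq.ne']
  have hM0 : 0 ≤ (∑ j, f j ^ q) ^ (1 / q) := Real.rpow_nonneg hsum0 _
  generalize (∑ j, f j ^ q) ^ (1 / q) = M at h hMq hM0 ⊢
  rcases hM0.eq_or_lt with rfl | hM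
  · have hsum : ∑ j, f j ^ q = 0 := by rw [← hMq, Real.zero_rpow hq.ne']
    have := (sum_eq_zero_iff_of_nonneg fun j _ => Real.rpow_nonneg (hf j) q).1 hsum i (mem_univ i)
    rw [zero_mul]
    exact ((Real.rpow_eq_zero_iff_of_nonneg (hf i)).1 this).1
  have young_eq : (f i / M) ^ q = g i ^ p := by
    refine rpow_eq_rpow_of_one_le_sum_mul hpq.symm (fun j => div_nonneg (hf j) hM.le) hg ?_ hg1
      ?_ i
    · rw [sum_congr rfl fun j _ => Real.div_rpow (hf j) hM.le q, ← sum_div, ← hMq,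
        div_self (by positivity)]
    · simp only [div_mul_eq_mul_div]
      rwa [← sum_div, one_le_div hM]
  have : f i / M = g i ^ (p - 1) := by
    rw [← Real.rpow_rpow_inv (div_nonneg (hf i) hM.le) hq.ne', young_eq, ← Real.rpow_mul (hg i),
      ← div_eq_mul_inv, hpq.div_conj_eq_sub_one]
  rw [← this, mul_div_cancel₀ _ hM.ne']

theorem eq_of_lpNorm_le_norm_sum_mul {ι : Type*} [Fintype ι] {p q : ℝ}
    (hpq : p.HolderConjugate q) {a w : ι → ℂ} (hw : ∑ i, ‖w i‖ ^ p = 1)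
    (h : (∑ i, ‖a i‖ ^ q) ^ (1 / q) ≤ ‖∑ i, a i * w i‖) (i : ι) :
    a i = (∑ j, a j * w j) * ((‖w i‖ ^ p : ℝ) / w i) := by
  -- at `w i = 0` the factor `‖w i‖ ^ p / w i` is `0` (division by zero), matching `a i = 0`
  set S := ∑ j, a j * w j
  set M := (∑ i, ‖a i‖ ^ q) ^ (1 / q)
  have holder : ∑ j, ‖a j‖ * ‖w j‖ ≤ M := by
    simpa only [abs_norm, hw, Real.one_rpow, mul_one] using
      Real.inner_le_Lp_mul_Lq univ (fun j => ‖a j‖) (fun j => ‖w j‖) hpq.symm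
  have triangle : ‖S‖ ≤ ∑ j, ‖a j‖ * ‖w j‖ := by
    simpa only [norm_mul] using norm_sum_le univ fun j => a j * w j
  have hSM : ‖S‖ = M := by linarith
  have hnorm := eq_mul_rpow_of_lpNorm_le_sum_mul hpq (fun j => norm_nonneg (a j))
    (fun j => norm_nonneg (w j)) hw (h.trans triangle) i
  rcases eq_or_ne (w i) 0 with hwi | hwi
  · have : a i = 0 := by
      simpa [hwi, Real.zero_rpow hpq.sub_one_pos.ne'] using hnorm
    simp [this, hwi]
  rcases eq_or_ne M 0 with hM | hM
  · have hai : a i = 0 := norm_eq_zero.1 (hnorm.trans (mul_eq_zero_of_left hM _))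
    rw [hai, norm_eq_zero.1 (hSM.trans hM), zero_mul]
  have hai := Complex.norm_sum_mul_eq_norm_mul_sum_of_norm_sum_eq (z := fun j => a j * w j)
    (by simpa only [norm_mul] using le_antisymm triangle (holder.trans hSM.ge)) i
  have : ‖a i‖ * ‖w i‖ = M * ‖w i‖ ^ p := by
    rw [hnorm, mul_assoc, ← Real.rpow_add_one (norm_ne_zero_iff.2 hwi), sub_add_cancel]
  rw [norm_mul, this, hSM] at hai
  rw [mul_div_assoc', eq_div_iff hwi]
  apply mul_left_cancel₀ (Complex.ofReal_ne_zero.2 hM)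
  push_cast at hai ⊢
  linear_combination hai

/-- Equality ‖A‖_p = |A|_{p/(p-1)} forces rank one. -/
theorem stmt_12 (m n : ℕ) (A : Matrix (Fin m) (Fin n) ℂ) (p : ℝ) (hp : 1 < p)
    (hA : A ≠ 0)
    (heq : specNorm m n p A =
      (∑ i, ∑ j, ‖A i j‖ ^ (p / (p - 1))) ^ ((p - 1) / p)) :
    ∃ (u : Fin m → ℂ) (v : Fin n → ℂ), ∀ i j, A i j = u i * v j := by
  obtain ⟨i₀, j₀, -⟩ : ∃ i j, A i j ≠ 0 := by simpa [← Matrix.ext_iff] using hA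
  have : Nonempty (Fin m) := ⟨i₀⟩
  have : Nonempty (Fin n) := ⟨j₀⟩
  have hpq : p.HolderConjugate (p / (p - 1)) := (Real.holderConjugate_iff_eq_conjExponent hp).2 rfl
  obtain ⟨x, hx, y, hy, hxy⟩ := exists_norm_sum_eq_specNorm hpq.pos A
  have hw : ∑ e : Fin m × Fin n, ‖x e.2 * y e.1‖ ^ p = 1 := by
    simp only [norm_mul, Real.mul_rpow (norm_nonneg _) (norm_nonneg _), Fintype.sum_prod_type,
      ← mul_sum, ← sum_mul]
    rw [hx, hy, one_mul]
  have hrank := eq_of_lpNorm_le_norm_sum_mul hpq (a := fun e => A e.1 e.2) hw <| by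
    simp only [Fintype.sum_prod_type, one_div_div, ← heq, ← hxy, mul_assoc]
    rfl
  refine ⟨fun i => (∑ e : Fin m × Fin n, A e.1 e.2 * (x e.2 * y e.1)) *
      ((‖y i‖ ^ p : ℝ) / y i), fun j => (‖x j‖ ^ p : ℝ) / x j, fun i j => ?_⟩
  rw [hrank (i, j), norm_mul, Real.mul_rpow (norm_nonneg _) (norm_nonneg _), Complex.ofReal_mul,
    mul_div_mul_comm]
  ring
end

section
/- Let p ≥ 2 and let A be a nonnegative symmetric n×n real matrix all of whose row sums are equal to d. Then max { xᵀAx : x ∈ ℝⁿ, ‖x‖_p = 1 } = n^{−2/p} · (nd), i.e., the p-spectral radius of A equals n^{−2/p} times the sum of all entries of A. -/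
/-!
For `‖x‖_p = 1`, the bound `2 x_i x_j ≤ x_i² + x_j²` and the row (and, by symmetry, column) sums
give `xᵀAx ≤ d ‖x‖₂²`, and Hölder's inequality gives `‖x‖₂² ≤ n^(1 - 2/p)` when `p ≥ 2`.
The constant vector `n^(-1/p)` attains the resulting bound `n^(-2/p) · n d`.
-/

open Finset

section RegularMatrix

variable {ι : Type*} [Fintype ι] {A : Matrix ι ι ℝ} {d : ℝ}

theorem sum_sum_mul_left_eq_of_rowSum (hreg : ∀ i, ∑ j, A i j = d) (y : ι → ℝ) :
    ∑ i, ∑ j, A i j * y i = d * ∑ i, y i := by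
  simp only [← sum_mul, hreg, mul_sum]

theorem sum_sum_mul_right_eq_of_rowSum (hsym : A.IsSymm) (hreg : ∀ i, ∑ j, A i j = d)
    (y : ι → ℝ) : ∑ i, ∑ j, A i j * y j = d * ∑ i, y i := by
  rw [sum_comm]
  simp only [fun i j => hsym.apply j i]
  exact sum_sum_mul_left_eq_of_rowSum hreg y

theorem quadForm_le_rowSum_mul_sum_sq (hsym : A.IsSymm) (hnn : ∀ i j, 0 ≤ A i j)
    (hreg : ∀ i, ∑ j, A i j = d) (x : ι → ℝ) :
    ∑ i, ∑ j, A i j * x i * x j ≤ d * ∑ i, x i ^ 2 :=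
  calc ∑ i, ∑ j, A i j * x i * x j
      ≤ ∑ i, ∑ j, (A i j * x i ^ 2 + A i j * x j ^ 2) / 2 := by
        gcongr with i _ j _
        nlinarith [hnn i j, mul_nonneg (hnn i j) (sq_nonneg (x i - x j))]
    _ = (∑ i, ∑ j, A i j * x i ^ 2 + ∑ i, ∑ j, A i j * x j ^ 2) / 2 := by
        simp only [← sum_div, sum_add_distrib]
    _ = d * ∑ i, x i ^ 2 := by
        rw [sum_sum_mul_left_eq_of_rowSum hreg, sum_sum_mul_right_eq_of_rowSum hsym hreg]
        ring

theorem quadForm_const_of_rowSum (hreg : ∀ i, ∑ j, A i j = d) (c : ℝ) :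
    ∑ i, ∑ j, A i j * c * c = c ^ 2 * (Fintype.card ι * d) := by
  simp only [← sum_mul, hreg, sum_const, card_univ, nsmul_eq_mul]
  ring

end RegularMatrix

theorem sum_sq_le_card_rpow_mul_sum_abs_rpow {ι : Type*} [Fintype ι] {p : ℝ} (hp : 2 ≤ p)
    (x : ι → ℝ) :
    ∑ i, x i ^ 2 ≤ (Fintype.card ι : ℝ) ^ (1 - 2 / p) * (∑ i, |x i| ^ p) ^ (2 / p) := by
  have hholder := Real.inner_le_weight_mul_Lp_of_nonneg univ (p := p / 2) (by linarith)
    (fun _ => 1) (fun i => x i ^ 2) (fun _ => zero_le_one) (fun i => sq_nonneg (x i))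
  have hpow : ∀ i, (x i ^ 2) ^ (p / 2) = |x i| ^ p := fun i => by
    rw [← sq_abs, ← Real.rpow_natCast, ← Real.rpow_mul (abs_nonneg _)]
    congr 1
    field_simp
    norm_num
  simpa [hpow, inv_div] using hholder

/-- For a nonnegative symmetric regular matrix (all row sums d)
and p ≥ 2, the p-spectral radius equals n^{-2/p}·(nd). -/
theorem stmt_16 (n : ℕ) (hn : 0 < n) (p : ℝ) (hp : 2 ≤ p)
    (A : Matrix (Fin n) (Fin n) ℝ) (hsym : A.IsSymm)
    (hnn : ∀ i j, 0 ≤ A i j) (d : ℝ) (hreg : ∀ i, ∑ j, A i j = d) :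
    sSup {t : ℝ | ∃ x : Fin n → ℝ, (∑ i, |x i| ^ p) = 1 ∧
        t = ∑ i, ∑ j, A i j * x i * x j} =
      (n : ℝ) ^ (-(2 / p)) * ((n : ℝ) * d) := by
  have hn0 : (0 : ℝ) < n := by exact_mod_cast hn
  have hd : 0 ≤ d := hreg ⟨0, hn⟩ ▸ sum_nonneg fun j _ => hnn _ _
  set c := (n : ℝ) ^ (-(1 / p))
  have hc : 0 < c := Real.rpow_pos_of_pos hn0 _
  refine IsGreatest.csSup_eq ⟨⟨fun _ => c, ?_, ?_⟩, ?_⟩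
  · simp only [abs_of_pos hc, sum_const, card_univ, Fintype.card_fin, nsmul_eq_mul, c,
      ← Real.rpow_mul hn0.le]
    rw [show -(1 / p) * p = -1 by field_simp, Real.rpow_neg_one, mul_inv_cancel₀ hn0.ne']
  · rw [quadForm_const_of_rowSum hreg, Fintype.card_fin, ← Real.rpow_natCast, ← Real.rpow_mul hn0.le]
    ring_nf
  · rintro t ⟨x, hx, rfl⟩
    calc ∑ i, ∑ j, A i j * x i * x j ≤ d * ∑ i, x i ^ 2 :=
          quadForm_le_rowSum_mul_sum_sq hsym hnn hreg x
      _ ≤ d * (n : ℝ) ^ (1 - 2 / p) := by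
          have := sum_sq_le_card_rpow_mul_sum_abs_rpow hp x
          rw [hx, Real.one_rpow, mul_one, Fintype.card_fin] at this
          gcongr
      _ = (n : ℝ) ^ (-(2 / p)) * ((n : ℝ) * d) := by
          rw [Real.rpow_sub hn0, Real.rpow_one, Real.rpow_neg hn0.le]
          ring
end

section
/- Let p > 2 and let A be a nonnegative symmetric matrix that is block diagonal with symmetric nonnegative blocks A₁, …, A_k (its components). Then λ^{(p)}(A) = (∑_{i=1}^k λ^{(p)}(A_i)^{p/(p−2)})^{(p−2)/p}, where λ^{(p)}(M) = max { xᵀMx : ‖x‖_p = 1 }. -/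
/-!
The quadratic form of a block-diagonal matrix is the sum of the quadratic forms of its blocks.
By homogeneity, a block carrying `p`-mass `sᵢ` (so `∑ sᵢ = 1`) contributes at most
`λ(Bᵢ) sᵢ ^ (2 / p)`, and Hölder's inequality with exponents `p / (p - 2)` and `p / 2` bounds
`∑ λ(Bᵢ) sᵢ ^ (2 / p)` by `(∑ λ(Bᵢ) ^ (p / (p - 2))) ^ ((p - 2) / p)`. Conversely, gluing
maximisers of the blocks with masses `sᵢ ∝ λ(Bᵢ) ^ (p / (p - 2))`, the equality case of Hölder,
attains this value.
-/

/-- The p-spectral radius λ^{(p)} of a real square matrix. -/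
noncomputable def lamP {ι : Type*} [Fintype ι] (p : ℝ) (M : Matrix ι ι ℝ) : ℝ :=
  sSup {t : ℝ | ∃ x : ι → ℝ, (∑ i, |x i| ^ p) = 1 ∧
    t = ∑ i, ∑ j, M i j * x i * x j}

open Finset Real

section

variable {ι : Type*} [Fintype ι] {p : ℝ}

def pSphere (ι : Type*) [Fintype ι] (p : ℝ) : Set (ι → ℝ) := {x | ∑ i, |x i| ^ p = 1}

theorem mem_pSphere {x : ι → ℝ} : x ∈ pSphere ι p ↔ ∑ i, |x i| ^ p = 1 := Iff.rfl

def quadForm (M : Matrix ι ι ℝ) (x : ι → ℝ) : ℝ := ∑ i, ∑ j, M i j * x i * x j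

theorem lamP_eq_sSup_image (M : Matrix ι ι ℝ) :
    lamP p M = sSup (quadForm M '' pSphere ι p) :=
  congrArg sSup (Set.ext fun _ ↦ exists_congr fun _ ↦ and_congr Iff.rfl eq_comm)

theorem abs_le_one_of_mem_pSphere (hp : 0 < p) {x : ι → ℝ} (hx : x ∈ pSphere ι p) (i : ι) :
    |x i| ≤ 1 := by
  have hi : |x i| ^ p ≤ 1 ^ p := by
    rw [one_rpow, ← hx]
    exact single_le_sum (fun j _ ↦ rpow_nonneg (abs_nonneg (x j)) p) (mem_univ i)
  exact (rpow_le_rpow_iff (abs_nonneg _) zero_le_one hp).mp hi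

theorem isCompact_pSphere (hp : 0 < p) : IsCompact (pSphere ι p) := by
  have hclosed : IsClosed (pSphere ι p) :=
    isClosed_eq (by fun_prop (disch := exact hp.le)) continuous_const
  refine (isCompact_univ_pi fun _ ↦ isCompact_Icc (a := -1) (b := 1)).of_isClosed_subset
    hclosed fun x hx i _ ↦ ?_
  exact abs_le.mp (abs_le_one_of_mem_pSphere hp hx i)

theorem single_mem_pSphere [DecidableEq ι] (hp : 0 < p) (i : ι) :
    Pi.single i 1 ∈ pSphere ι p := by
  simp [pSphere, Pi.single_apply, apply_ite (fun t : ℝ ↦ |t| ^ p), zero_rpow hp.ne']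

theorem continuous_quadForm (M : Matrix ι ι ℝ) : Continuous (quadForm M) := by
  unfold quadForm; fun_prop

theorem quadForm_single [DecidableEq ι] (M : Matrix ι ι ℝ) (i : ι) :
    quadForm M (Pi.single i 1) = M i i := by
  simp [quadForm, Pi.single_apply]

theorem quadForm_smul (M : Matrix ι ι ℝ) (c : ℝ) (x : ι → ℝ) :
    quadForm M (c • x) = c ^ 2 * quadForm M x := by
  simp only [quadForm, mul_sum, Pi.smul_apply, smul_eq_mul]
  exact sum_congr rfl fun i _ ↦ sum_congr rfl fun j _ ↦ by ring

theorem sum_abs_smul_rpow {c : ℝ} (hc : 0 ≤ c) (x : ι → ℝ) :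
    ∑ i, |(c • x) i| ^ p = c ^ p * ∑ i, |x i| ^ p := by
  simp only [mul_sum, Pi.smul_apply, smul_eq_mul, abs_mul, abs_of_nonneg hc,
    mul_rpow hc (abs_nonneg _)]

theorem quadForm_le_lamP (hp : 0 < p) (M : Matrix ι ι ℝ) {x : ι → ℝ} (hx : x ∈ pSphere ι p) :
    quadForm M x ≤ lamP p M := by
  rw [lamP_eq_sSup_image]
  exact le_csSup ((isCompact_pSphere hp).image (continuous_quadForm M)).bddAbove ⟨x, hx, rfl⟩

theorem exists_quadForm_eq_lamP [Nonempty ι] (hp : 0 < p) (M : Matrix ι ι ℝ) :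
    ∃ x ∈ pSphere ι p, quadForm M x = lamP p M := by
  classical
  rw [lamP_eq_sSup_image]
  exact ((isCompact_pSphere hp).image (continuous_quadForm M)).sSup_mem
    (Set.Nonempty.image _ ⟨_, single_mem_pSphere hp (Classical.arbitrary ι)⟩)

theorem lamP_of_isEmpty [IsEmpty ι] (M : Matrix ι ι ℝ) : lamP p M = 0 := by
  have hempty : pSphere ι p = ∅ := by ext x; simp [pSphere]
  rw [lamP_eq_sSup_image, hempty, Set.image_empty, Real.sSup_empty]

theorem lamP_nonneg (hp : 0 < p) {M : Matrix ι ι ℝ} (hM : ∀ i j, 0 ≤ M i j) : 0 ≤ lamP p M := by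
  classical
  rcases isEmpty_or_nonempty ι with _ | ⟨⟨i⟩⟩
  · exact (lamP_of_isEmpty M).ge
  · exact (hM i i).trans (quadForm_single M i ▸ quadForm_le_lamP hp M (single_mem_pSphere hp i))

theorem quadForm_le_lamP_mul_rpow (hp : 0 < p) (M : Matrix ι ι ℝ) (x : ι → ℝ) :
    quadForm M x ≤ lamP p M * (∑ i, |x i| ^ p) ^ (2 / p) := by
  set s := ∑ i, |x i| ^ p
  have hs : 0 ≤ s := sum_nonneg fun i _ ↦ rpow_nonneg (abs_nonneg (x i)) p
  rcases hs.eq_or_lt with hs0 | hs0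
  · have hx : x = 0 := funext fun i ↦ by
      have := (sum_eq_zero_iff_of_nonneg fun j _ ↦ rpow_nonneg (abs_nonneg (x j)) p).mp
        hs0.symm i (mem_univ i)
      simpa [rpow_eq_zero_iff_of_nonneg, hp.ne'] using this
    simp [hx, quadForm, ← hs0, zero_rpow (div_pos two_pos hp).ne']
  set c := s ^ (1 / p)
  have hc : 0 < c := rpow_pos_of_pos hs0 _
  have hcp : c ^ p = s := by rw [← rpow_mul hs, one_div_mul_cancel hp.ne', rpow_one]
  have hmem : c⁻¹ • x ∈ pSphere ι p := by
    rw [mem_pSphere, sum_abs_smul_rpow (inv_nonneg.mpr hc.le), inv_rpow hc.le, hcp,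
      inv_mul_cancel₀ hs0.ne']
  have hc2 : c ^ 2 = s ^ (2 / p) := by
    rw [← rpow_natCast, ← rpow_mul hs]; ring_nf
  calc quadForm M x = c ^ 2 * quadForm M (c⁻¹ • x) := by
        rw [quadForm_smul, ← mul_assoc, ← mul_pow, mul_inv_cancel₀ hc.ne', one_pow, one_mul]
    _ ≤ c ^ 2 * lamP p M := by gcongr; exact quadForm_le_lamP hp M hmem
    _ = lamP p M * s ^ (2 / p) := by rw [hc2, mul_comm]

end

theorem sum_mul_rpow_le_of_sum_eq_one {κ : Type*} [Fintype κ] {r p : ℝ} (hr : 0 < r)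
    (hrp : r < p) {a s : κ → ℝ} (ha : ∀ i, 0 ≤ a i) (hs : ∀ i, 0 ≤ s i) (hs1 : ∑ i, s i = 1) :
    ∑ i, a i * s i ^ (r / p) ≤ (∑ i, a i ^ (p / (p - r))) ^ ((p - r) / p) := by
  have hp : 0 < p := hr.trans hrp
  have hpr : 0 < p - r := sub_pos.mpr hrp
  have hconj : (p / (p - r)).HolderConjugate (p / r) := by
    rw [Real.holderConjugate_iff, lt_div_iff₀ hpr, inv_div, inv_div, ← add_div,
      sub_add_cancel, div_self (by linarith)]
    exact ⟨by linarith, rfl⟩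
  have hss : ∀ i, (s i ^ (r / p)) ^ (p / r) = s i := fun i ↦ by
    rw [← rpow_mul (hs i), show r / p * (p / r) = 1 by field_simp, rpow_one]
  have := inner_le_Lp_mul_Lq_of_nonneg univ hconj (fun i _ ↦ ha i)
    (fun i _ ↦ rpow_nonneg (hs i) (r / p))
  simpa only [hss, hs1, one_rpow, mul_one, one_div_div] using this

theorem sum_rpow_div_rpow_mul_eq {κ : Type*} [Fintype κ] {r p : ℝ} (hr : 0 < r)
    (hrp : r < p) {a : κ → ℝ} (ha : ∀ i, 0 ≤ a i) (hT : 0 < ∑ i, a i ^ (p / (p - r))) :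
    ∑ i, (a i ^ (p / (p - r)) / ∑ j, a j ^ (p / (p - r))) ^ (r / p) * a i =
      (∑ i, a i ^ (p / (p - r))) ^ ((p - r) / p) := by
  set T := ∑ i, a i ^ (p / (p - r))
  have hp : 0 < p := hr.trans hrp
  have hpr : 0 < p - r := sub_pos.mpr hrp
  have hterm : ∀ i,
      (a i ^ (p / (p - r)) / T) ^ (r / p) * a i = a i ^ (p / (p - r)) / T ^ (r / p) := by
    intro i
    rw [div_rpow (rpow_nonneg (ha i) _) hT.le, ← rpow_mul (ha i), div_mul_eq_mul_div,
      ← rpow_add_one' (ha i)]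
    · congr 2; field_simp; ring
    · positivity
  rw [sum_congr rfl fun i _ ↦ hterm i, ← sum_div, show (p - r) / p = 1 - r / p by field_simp,
    rpow_sub hT, rpow_one]

section BlockDiagonal

variable {o : Type*} [DecidableEq o] {m : o → Type*}

theorem Matrix.blockDiagonal'_nonneg {B : ∀ i, Matrix (m i) (m i) ℝ}
    (hB : ∀ i a b, 0 ≤ B i a b) :
    ∀ a b, 0 ≤ Matrix.blockDiagonal' B a b := by
  rintro ⟨i, a⟩ ⟨j, b⟩
  rw [Matrix.blockDiagonal'_apply']
  split_ifs with h
  · exact hB _ _ _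
  · exact le_rfl

variable [Fintype o] [∀ i, Fintype (m i)] {p : ℝ}

theorem quadForm_blockDiagonal' (B : ∀ i, Matrix (m i) (m i) ℝ) (x : (Σ i, m i) → ℝ) :
    quadForm (Matrix.blockDiagonal' B) x = ∑ i, quadForm (B i) fun a ↦ x ⟨i, a⟩ := by
  simp only [quadForm, Fintype.sum_sigma]
  refine sum_congr rfl fun i _ ↦ sum_congr rfl fun a _ ↦ ?_
  rw [sum_eq_single i]
  · simp [Matrix.blockDiagonal'_apply_eq]
  · intro j _ hj
    simp [Matrix.blockDiagonal'_apply_ne B a _ (Ne.symm hj)]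
  · simp

theorem lamP_blockDiagonal'_le (hp : 2 < p) (B : ∀ i, Matrix (m i) (m i) ℝ)
    (hB : ∀ i, 0 ≤ lamP p (B i)) :
    lamP p (Matrix.blockDiagonal' B) ≤ (∑ i, lamP p (B i) ^ (p / (p - 2))) ^ ((p - 2) / p) := by
  have hp0 : 0 < p := by linarith
  rw [lamP_eq_sSup_image]
  refine Real.sSup_le ?_ (rpow_nonneg (sum_nonneg fun i _ ↦ rpow_nonneg (hB i) _) _)
  rintro _ ⟨x, hx, rfl⟩
  have hblock : ∀ i, 0 ≤ ∑ a, |x ⟨i, a⟩| ^ p := fun i ↦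
    sum_nonneg fun a _ ↦ rpow_nonneg (abs_nonneg _) p
  have hsum : ∑ i, ∑ a, |x ⟨i, a⟩| ^ p = 1 :=
    (Fintype.sum_sigma fun σ ↦ |x σ| ^ p).symm.trans hx
  calc quadForm (Matrix.blockDiagonal' B) x
      ≤ ∑ i, lamP p (B i) * (∑ a, |x ⟨i, a⟩| ^ p) ^ (2 / p) := by
        rw [quadForm_blockDiagonal']
        exact sum_le_sum fun i _ ↦ quadForm_le_lamP_mul_rpow hp0 (B i) _
    _ ≤ _ := sum_mul_rpow_le_of_sum_eq_one two_pos hp hB hblock hsum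

theorem le_lamP_blockDiagonal' (hp : 0 < p) (B : ∀ i, Matrix (m i) (m i) ℝ) {c : o → ℝ}
    (hc : ∀ i, 0 ≤ c i) (hc1 : ∑ i, c i = 1) (hcB : ∀ i, lamP p (B i) = 0 → c i = 0) :
    ∑ i, c i ^ (2 / p) * lamP p (B i) ≤ lamP p (Matrix.blockDiagonal' B) := by
  have hy : ∀ i, ∃ y : m i → ℝ,
      c i * ∑ a, |y a| ^ p = c i ∧ quadForm (B i) y = lamP p (B i) := by
    intro i
    rcases isEmpty_or_nonempty (m i) with _ | _
    · exact ⟨0, by simp [hcB i (lamP_of_isEmpty _)], by simp [quadForm, lamP_of_isEmpty]⟩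
    · obtain ⟨y, hy, hyB⟩ := exists_quadForm_eq_lamP hp (B i)
      exact ⟨y, by rw [mem_pSphere.mp hy, mul_one], hyB⟩
  choose y hy hyB using hy
  let x : (Σ i, m i) → ℝ := fun σ ↦ (c σ.1 ^ (1 / p) • y σ.1) σ.2
  have hcp : ∀ i, (c i ^ (1 / p)) ^ p = c i := fun i ↦ by
    rw [← rpow_mul (hc i), one_div_mul_cancel hp.ne', rpow_one]
  have hc2 : ∀ i, (c i ^ (1 / p)) ^ 2 = c i ^ (2 / p) := fun i ↦ by
    rw [← rpow_natCast, ← rpow_mul (hc i)]; ring_nf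
  have hx : x ∈ pSphere (Σ i, m i) p := by
    rw [mem_pSphere, Fintype.sum_sigma, ← hc1]
    refine sum_congr rfl fun i _ ↦ ?_
    change ∑ a, |(c i ^ (1 / p) • y i) a| ^ p = c i
    rw [sum_abs_smul_rpow (rpow_nonneg (hc i) _), hcp, hy]
  calc ∑ i, c i ^ (2 / p) * lamP p (B i) = quadForm (Matrix.blockDiagonal' B) x := by
        rw [quadForm_blockDiagonal']
        refine sum_congr rfl fun i _ ↦ ?_
        change _ = quadForm (B i) (c i ^ (1 / p) • y i)
        rw [quadForm_smul, hc2, hyB]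
    _ ≤ _ := quadForm_le_lamP hp _ hx

end BlockDiagonal

theorem stmt_18_general (k : ℕ) (n : Fin k → ℕ) (p : ℝ) (hp : 2 < p)
    (B : ∀ i : Fin k, Matrix (Fin (n i)) (Fin (n i)) ℝ)
    (hnn : ∀ i a b, 0 ≤ B i a b) :
    lamP p (Matrix.blockDiagonal' B) =
      (∑ i, (lamP p (B i)) ^ (p / (p - 2))) ^ ((p - 2) / p) := by
  have hp0 : 0 < p := by linarith
  have hB : ∀ i, 0 ≤ lamP p (B i) := fun i ↦ lamP_nonneg hp0 (hnn i)
  set T := ∑ i, lamP p (B i) ^ (p / (p - 2))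
  refine le_antisymm (lamP_blockDiagonal'_le hp B hB) ?_
  have hT0 : 0 ≤ T := sum_nonneg fun i _ ↦ rpow_nonneg (hB i) _
  rcases hT0.eq_or_lt with hT | hT
  · rw [← hT, zero_rpow (div_pos (by linarith) hp0).ne']
    exact lamP_nonneg hp0 (Matrix.blockDiagonal'_nonneg hnn)
  · rw [← sum_rpow_div_rpow_mul_eq two_pos hp hB hT]
    refine le_lamP_blockDiagonal' hp0 B (fun i ↦ div_nonneg (rpow_nonneg (hB i) _) hT.le)
      (by rw [← sum_div, div_self hT.ne']) fun i hi ↦ ?_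
    rw [hi, zero_rpow (div_pos hp0 (by linarith)).ne', zero_div]

/-- For p > 2 and a nonnegative symmetric block-diagonal matrix
with blocks A₁,…,A_k, λ^{(p)}(A) = (∑ λ^{(p)}(A_i)^{p/(p-2)})^{(p-2)/p}. -/
theorem stmt_18 (k : ℕ) (n : Fin k → ℕ) (p : ℝ) (hp : 2 < p)
    (B : ∀ i : Fin k, Matrix (Fin (n i)) (Fin (n i)) ℝ)
    (hsym : ∀ i, (B i).IsSymm) (hnn : ∀ i a b, 0 ≤ B i a b) :
    lamP p (Matrix.blockDiagonal' B) =
      (∑ i, (lamP p (B i)) ^ (p / (p - 2))) ^ ((p - 2) / p) :=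
  stmt_18_general k n p hp B hnn
end

section
/- Let G be a finite simple graph with adjacency matrix A and vertex degrees d₁, …, d_n. Then the spectral radius ρ(G) of A satisfies ρ(G)² ≤ max over edges {i,j} ∈ E(G) of d_i · d_j. -/
open Finset

/-- Berman–Zhang bound: ρ(G)² ≤ max_{{i,j} ∈ E(G)} d_i d_j. -/
theorem stmt_19 (n : ℕ) (G : SimpleGraph (Fin n)) [DecidableRel G.Adj] :
    (sSup {t : ℝ | ∃ x : Fin n → ℝ, (∑ i, x i ^ 2) = 1 ∧
        t = ∑ i, ∑ j, (G.adjMatrix ℝ) i j * x i * x j}) ^ 2 ≤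
    sSup {t : ℝ | ∃ i j, G.Adj i j ∧
        t = (G.degree i : ℝ) * (G.degree j : ℝ)} := by
  set S₂ : Set ℝ := {t : ℝ | ∃ i j, G.Adj i j ∧
      t = (G.degree i : ℝ) * (G.degree j : ℝ)} with hS₂def
  set S₁ : Set ℝ := {t : ℝ | ∃ x : Fin n → ℝ, (∑ i, x i ^ 2) = 1 ∧
      t = ∑ i, ∑ j, (G.adjMatrix ℝ) i j * x i * x j} with hS₁def
  set M := sSup S₂ with hMdef
  have hM0 : 0 ≤ M := Real.sSup_nonneg (by rintro t ⟨i, j, hij, rfl⟩; positivity)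
  have hbdd₂ : BddAbove S₂ := by
    refine Set.Finite.bddAbove (Set.Finite.subset
      (Set.finite_range (fun p : Fin n × Fin n => (G.degree p.1 : ℝ) * (G.degree p.2 : ℝ))) ?_)
    rintro t ⟨i, j, hij, rfl⟩; exact ⟨(i, j), rfl⟩
  have hdM : ∀ i j, G.Adj i j → (G.degree i : ℝ) * (G.degree j : ℝ) ≤ M :=
    fun i j h => le_csSup hbdd₂ ⟨i, j, h, rfl⟩
  have hrowsum : ∀ j, (∑ i, (G.adjMatrix ℝ) j i) = (G.degree j : ℝ) := by
    intro j
    simp [SimpleGraph.adjMatrix_apply, Finset.sum_boole, SimpleGraph.degree,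
      SimpleGraph.neighborFinset_eq_filter]
  -- weighted row sum bound
  have hrow : ∀ j, (∑ i, (G.adjMatrix ℝ) j i * (G.degree i : ℝ)) ≤ M := by
    intro j
    by_cases hdj : G.degree j = 0
    · have hzero : ∀ i, (G.adjMatrix ℝ) j i = 0 := by
        intro i
        simp only [SimpleGraph.adjMatrix_apply, ite_eq_right_iff, one_ne_zero]
        intro h
        have : 0 < G.degree j := Finset.card_pos.mpr
          ⟨i, (SimpleGraph.mem_neighborFinset G j i).mpr h⟩
        omega
      simp only [hzero, zero_mul, Finset.sum_const_zero]
      exact hM0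
    · have hdj' : (0 : ℝ) < (G.degree j : ℝ) := by
        exact_mod_cast Nat.pos_of_ne_zero hdj
      have key : (∑ i, (G.adjMatrix ℝ) j i * (G.degree i : ℝ)) * (G.degree j : ℝ)
          ≤ M * (G.degree j : ℝ) := by
        rw [Finset.sum_mul]
        calc (∑ i, (G.adjMatrix ℝ) j i * (G.degree i : ℝ) * (G.degree j : ℝ))
            ≤ ∑ i, (G.adjMatrix ℝ) j i * M := by
              refine Finset.sum_le_sum fun i _ => ?_
              by_cases h : G.Adj j i
              · simp only [SimpleGraph.adjMatrix_apply, h, if_true, one_mul]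
                have := hdM i j h.symm
                nlinarith
              · simp [SimpleGraph.adjMatrix_apply, h, hM0]
          _ = (∑ i, (G.adjMatrix ℝ) j i) * M := by rw [Finset.sum_mul]
          _ = (G.degree j : ℝ) * M := by rw [hrowsum]
          _ = M * (G.degree j : ℝ) := mul_comm _ _
      exact le_of_mul_le_mul_right key hdj'
  -- the key bound: every element t of S₁ has t² ≤ M
  have key : ∀ t ∈ S₁, t ^ 2 ≤ M := by
    rintro t ⟨x, hx, rfl⟩
    set y : Fin n → ℝ := fun i => ∑ j, (G.adjMatrix ℝ) i j * x j with hy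
    have step1 : (∑ i, ∑ j, (G.adjMatrix ℝ) i j * x i * x j) = ∑ i, x i * y i := by
      refine Finset.sum_congr rfl fun i _ => ?_
      rw [hy, Finset.mul_sum]
      refine Finset.sum_congr rfl fun j _ => by ring
    -- Cauchy–Schwarz per-row: y i ^ 2 ≤ d i * ∑ j, a i j * x j ^ 2
    have CS2 : ∀ i, y i ^ 2 ≤ (G.degree i : ℝ) * ∑ j, (G.adjMatrix ℝ) i j * x j ^ 2 := by
      intro i
      have h := Finset.sum_mul_sq_le_sq_mul_sq Finset.univ
        (fun j => (G.adjMatrix ℝ) i j) (fun j => (G.adjMatrix ℝ) i j * x j)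
      have e1 : ∀ j : Fin n, (G.adjMatrix ℝ) i j * ((G.adjMatrix ℝ) i j * x j)
          = (G.adjMatrix ℝ) i j * x j := by
        intro j; by_cases hadj : G.Adj i j <;> simp [SimpleGraph.adjMatrix_apply, hadj]
      have e2 : ∀ j : Fin n, ((G.adjMatrix ℝ) i j) ^ 2 = (G.adjMatrix ℝ) i j := by
        intro j; by_cases hadj : G.Adj i j <;> simp [SimpleGraph.adjMatrix_apply, hadj]
      have e3 : ∀ j : Fin n, ((G.adjMatrix ℝ) i j * x j) ^ 2
          = (G.adjMatrix ℝ) i j * x j ^ 2 := by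
        intro j; by_cases hadj : G.Adj i j <;>
          simp [SimpleGraph.adjMatrix_apply, hadj, mul_pow]
      simp only [e1, e2, e3] at h
      rw [hrowsum i] at h
      exact h
    have step3 : (∑ i, y i ^ 2) ≤ M := by
      calc (∑ i, y i ^ 2)
          ≤ ∑ i, (G.degree i : ℝ) * ∑ j, (G.adjMatrix ℝ) i j * x j ^ 2 :=
            Finset.sum_le_sum fun i _ => CS2 i
        _ = ∑ i, ∑ j, (G.degree i : ℝ) * ((G.adjMatrix ℝ) i j * x j ^ 2) := by
            refine Finset.sum_congr rfl fun i _ => Finset.mul_sum _ _ _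
        _ = ∑ j, ∑ i, (G.degree i : ℝ) * ((G.adjMatrix ℝ) i j * x j ^ 2) :=
            Finset.sum_comm
        _ = ∑ j, (∑ i, (G.adjMatrix ℝ) j i * (G.degree i : ℝ)) * x j ^ 2 := by
            refine Finset.sum_congr rfl fun j _ => ?_
            rw [Finset.sum_mul]
            refine Finset.sum_congr rfl fun i _ => ?_
            have hsymm : (G.adjMatrix ℝ) i j = (G.adjMatrix ℝ) j i := by
              simp [SimpleGraph.adjMatrix_apply, SimpleGraph.adj_comm]
            rw [hsymm]; ring
        _ ≤ ∑ j, M * x j ^ 2 := by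
            refine Finset.sum_le_sum fun j _ => ?_
            have := hrow j
            nlinarith [sq_nonneg (x j)]
        _ = M * ∑ j, x j ^ 2 := (Finset.mul_sum _ _ _).symm
        _ = M := by rw [hx, mul_one]
    have step2 : (∑ i, x i * y i) ^ 2 ≤ (∑ i, x i ^ 2) * (∑ i, y i ^ 2) :=
      Finset.sum_mul_sq_le_sq_mul_sq Finset.univ _ _
    rw [step1]
    calc (∑ i, x i * y i) ^ 2 ≤ (∑ i, x i ^ 2) * (∑ i, y i ^ 2) := step2
      _ = ∑ i, y i ^ 2 := by rw [hx, one_mul]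
      _ ≤ M := step3
  -- conclude
  by_cases hS₁e : S₁.Nonempty
  · have habs : ∀ t ∈ S₁, |t| ≤ Real.sqrt M := fun t ht => Real.abs_le_sqrt (key t ht)
    have hub : ∀ t ∈ S₁, t ≤ Real.sqrt M := fun t ht => (abs_le.mp (habs t ht)).2
    have hbdd₁ : BddAbove S₁ := ⟨Real.sqrt M, hub⟩
    have h1 : sSup S₁ ≤ Real.sqrt M := csSup_le hS₁e hub
    obtain ⟨t0, ht0⟩ := hS₁e
    have h2 : -Real.sqrt M ≤ sSup S₁ :=
      le_trans (abs_le.mp (habs t0 ht0)).1 (le_csSup hbdd₁ ht0)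
    have h3 : (sSup S₁) ^ 2 ≤ (Real.sqrt M) ^ 2 := sq_le_sq' h2 h1
    rwa [Real.sq_sqrt hM0] at h3
  · rw [Set.not_nonempty_iff_eq_empty.mp hS₁e, Real.sSup_empty]
    simpa using hM0
end
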